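/- arXiv:1401.4476 — 7 statements merged into one kernel-verified Lean document; each statement's English description precedes it below -/
import Mathlib

section
/- For every integer m ≥ 1, every T > 0, every generator Q ∈ ℝ^{m×m}, every bounded measurable function r : [0,T] × {1,…,m} → ℝ, and every continuous function P : [0,T] × {1,…,m} → (0,∞), the H-system associated with (r, Q, P) has exactly one solution H : [0,T] × {1,…,m} → ℝ. -/
/-!
Put `F(s, v) = r(s) * v + diag(P(s))⁻¹ (diag(Q P(s)) - Q diag(P(s))) v`, so that the H-system is the
backward Volterra equation `H(t) = 1 - ∫_t^T F(s, H(s)) ds`. Since `r` is bounded and measurable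
and the coupling matrix depends continuously on `s` (as `P` is continuous and positive on the
compact interval `[0,T]`), `F` is measurable in `s` and Lipschitz in `v`, uniformly in `s`. For
such a field the Picard map `Φ` on `C([0,T], ℝᵐ)` satisfies
`|Φⁿ u (t) - Φⁿ v (t)| ≤ (K (T - t))ⁿ / n! ‖u - v‖`, so some iterate of `Φ` is a contraction and
`Φ` has exactly one fixed point.
-/

open MeasureTheory Filter
open scoped BigOperators Topology

/-- `Q` is the generator matrix of a continuous-time Markov chain:
off-diagonal entries are nonnegative and each row sums to zero. -/
def IsGenerator {S : Type*} [Fintype S] (Q : Matrix S S ℝ) : Prop :=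
  (∀ i j, i ≠ j → 0 ≤ Q i j) ∧ ∀ i, ∑ j, Q i j = 0

/-- `f : [0,T] × S → ℝ` is bounded and measurable (in time, for each state). -/
def BddMeasOn {S : Type*} [Fintype S] (T : ℝ) (f : ℝ → S → ℝ) : Prop :=
  (∀ i, Measurable fun t => f t i) ∧
    ∃ C : ℝ, ∀ t ∈ Set.Icc (0:ℝ) T, ∀ i, |f t i| ≤ C

/-- `P` is a solution of the P-system associated with `(ρ, r, Q)` on `[0,T]`:
`P` is continuous on `[0,T]` and
`P(t,i) = 1 - ∫_t^T [P(s,i)(ρ(s,i) - 2 r(s,i)) - Σ_j q_{ij} P(s,j)] ds`. -/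
def IsPSol {S : Type*} [Fintype S] (T : ℝ) (Q : Matrix S S ℝ)
    (ρ r : ℝ → S → ℝ) (P : ℝ → S → ℝ) : Prop :=
  (∀ i, ContinuousOn (fun t => P t i) (Set.Icc 0 T)) ∧
    ∀ t ∈ Set.Icc (0:ℝ) T, ∀ i,
      P t i = 1 - ∫ s in t..T, (P s i * (ρ s i - 2 * r s i) - ∑ j, Q i j * P s j)

/-- `H` is a solution of the H-system associated with `(r, Q, P)` on `[0,T]`:
`H` is continuous on `[0,T]` and
`H(t,i) = 1 - ∫_t^T [H(s,i) r(s,i) - (1/P(s,i)) Σ_j q_{ij} P(s,j) H(s,j)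
  + (H(s,i)/P(s,i)) Σ_j q_{ij} P(s,j)] ds`. -/
def IsHSol {S : Type*} [Fintype S] (T : ℝ) (Q : Matrix S S ℝ)
    (r : ℝ → S → ℝ) (P : ℝ → S → ℝ) (H : ℝ → S → ℝ) : Prop :=
  (∀ i, ContinuousOn (fun t => H t i) (Set.Icc 0 T)) ∧
    ∀ t ∈ Set.Icc (0:ℝ) T, ∀ i,
      H t i = 1 - ∫ s in t..T,
        (H s i * r s i - (1 / P s i) * ∑ j, Q i j * P s j * H s j
          + (H s i / P s i) * ∑ j, Q i j * P s j)

open Set Function intervalIntegral Matrix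
open scoped NNReal Nat

section Volterra

variable {E : Type*} [NormedAddCommGroup E]

theorem norm_integral_le_of_norm_le_mul_pow [NormedSpace ℝ E] {f : ℝ → E} {t b c : ℝ} (n : ℕ)
    (htb : t ≤ b) (h : ∀ s ∈ Ioc t b, ‖f s‖ ≤ c * (b - s) ^ n) :
    ‖∫ s in t..b, f s‖ ≤ c * (b - t) ^ (n + 1) / (n + 1) := by
  calc ‖∫ s in t..b, f s‖ ≤ ∫ s in t..b, c * (b - s) ^ n :=
        norm_integral_le_of_norm_le htb (ae_of_all _ h)
          ((by fun_prop : Continuous _).intervalIntegrable _ _)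
    _ = c * (b - t) ^ (n + 1) / (n + 1) := by
        simp [integral_comp_sub_left (fun x => x ^ n) b, mul_div_assoc]

structure IsCaratheodoryLipschitz (F : ℝ → E → E) (K : ℝ≥0) : Prop where
  stronglyMeasurable : ∀ x, StronglyMeasurable (F · x)
  lipschitzWith : ∀ t, LipschitzWith K (F t)
  exists_norm_zero_le : ∃ C, ∀ t, ‖F t 0‖ ≤ C

namespace IsCaratheodoryLipschitz

variable [MeasurableSpace E] [BorelSpace E] [SecondCountableTopology E]
  {F : ℝ → E → E} {K : ℝ≥0} {a b : ℝ}

theorem stronglyMeasurable_comp (hF : IsCaratheodoryLipschitz F K) {u : ℝ → E}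
    (hu : Continuous u) : StronglyMeasurable fun t => F t (u t) :=
  (stronglyMeasurable_uncurry_of_continuous_of_stronglyMeasurable
    (u := fun x t => F t x) (fun t => (hF.lipschitzWith t).continuous) hF.stronglyMeasurable
    ).comp_measurable (hu.measurable.prodMk measurable_id)

theorem intervalIntegrable_comp (hF : IsCaratheodoryLipschitz F K) (hab : a ≤ b)
    (u : C(Icc a b, E)) (a' b' : ℝ) :
    IntervalIntegrable (fun t => F t (IccExtend hab u t)) volume a' b' := by
  obtain ⟨C, hC⟩ := hF.exists_norm_zero_le
  refine (intervalIntegrable_const (c := C + K * ‖u‖)).mono_fun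
    (hF.stronglyMeasurable_comp (continuous_IccExtend_iff.2 u.continuous)).aestronglyMeasurable
    (ae_of_all _ fun t => ?_)
  calc ‖F t (IccExtend hab u t)‖ ≤ ‖F t 0‖ + K * ‖IccExtend hab u t - 0‖ :=
        (norm_le_norm_add_norm_sub' _ (F t 0)).trans
          (add_le_add_right ((hF.lipschitzWith t).norm_sub_le _ _) _)
    _ ≤ C + K * ‖u‖ := by
        rw [sub_zero]
        gcongr
        · exact hC t
        · exact u.norm_coe_le_norm _
    _ ≤ ‖C + K * ‖u‖‖ := Real.le_norm_self _

variable [NormedSpace ℝ E]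

noncomputable def volterraMap (hF : IsCaratheodoryLipschitz F K) (hab : a ≤ b) (x₀ : E)
    (u : C(Icc a b, E)) : C(Icc a b, E) where
  toFun t := x₀ - ∫ s in t..b, F s (IccExtend hab u s)
  continuous_toFun := by
    refine continuous_const.sub
      ((continuousOn_primitive_interval_left (a := a) ?_).comp_continuous continuous_subtype_val
        fun t => ?_)
    · exact (intervalIntegrable_iff').1 (hF.intervalIntegrable_comp hab u a b)
    · simp [uIcc_of_le hab]

theorem volterraMap_apply (hF : IsCaratheodoryLipschitz F K) (hab : a ≤ b) (x₀ : E)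
    (u : C(Icc a b, E)) (t : Icc a b) :
    hF.volterraMap hab x₀ u t = x₀ - ∫ s in t..b, F s (IccExtend hab u s) := rfl

theorem dist_iterate_volterraMap_apply_le (hF : IsCaratheodoryLipschitz F K) (hab : a ≤ b)
    (x₀ : E) (n : ℕ) (u v : C(Icc a b, E)) (t : Icc a b) :
    dist ((hF.volterraMap hab x₀)^[n] u t) ((hF.volterraMap hab x₀)^[n] v t) ≤
      (K * (b - t)) ^ n / n ! * dist u v := by
  induction n generalizing t with
  | zero => simpa using ContinuousMap.dist_apply_le_dist t
  | succ n ih =>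
    set u' := (hF.volterraMap hab x₀)^[n] u
    set v' := (hF.volterraMap hab x₀)^[n] v
    rw [iterate_succ_apply', iterate_succ_apply', volterraMap_apply, volterraMap_apply,
      dist_eq_norm, sub_sub_sub_cancel_left, ← integral_sub (hF.intervalIntegrable_comp hab _ _ _)
        (hF.intervalIntegrable_comp hab _ _ _)]
    have hstep : ∀ s ∈ Ioc (t : ℝ) b, ‖F s (IccExtend hab v' s) - F s (IccExtend hab u' s)‖ ≤
        (K ^ (n + 1) / n ! * dist u v) * (b - s) ^ n := by
      intro s hs
      have hs' : s ∈ Icc a b := ⟨t.2.1.trans hs.1.le, hs.2⟩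
      rw [IccExtend_of_mem hab _ hs', IccExtend_of_mem hab _ hs', ← dist_eq_norm, dist_comm]
      calc dist (F s (u' ⟨s, hs'⟩)) (F s (v' ⟨s, hs'⟩))
          ≤ K * dist (u' ⟨s, hs'⟩) (v' ⟨s, hs'⟩) := (hF.lipschitzWith s).dist_le_mul _ _
        _ ≤ K * ((K * (b - s)) ^ n / n ! * dist u v) := by gcongr; exact ih _
        _ = (K ^ (n + 1) / n ! * dist u v) * (b - s) ^ n := by rw [mul_pow]; ring
    refine (norm_integral_le_of_norm_le_mul_pow n t.2.2 hstep).trans_eq ?_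
    rw [Nat.factorial_succ, mul_pow]
    push_cast
    field_simp

theorem exists_contractingWith_iterate_volterraMap (hF : IsCaratheodoryLipschitz F K)
    (hab : a ≤ b) (x₀ : E) : ∃ n, ∃ L, ContractingWith L (hF.volterraMap hab x₀)^[n] := by
  obtain ⟨n, hn⟩ := ((FloorSemiring.tendsto_pow_div_factorial_atTop (K * (b - a))
    ).eventually_lt_const one_pos).exists
  have hL : (0 : ℝ) ≤ (K * (b - a)) ^ n / n ! := by
    have := sub_nonneg.2 hab
    positivity
  refine ⟨n, ⟨_, hL⟩, NNReal.coe_lt_one.1 hn, LipschitzWith.of_dist_le_mul fun u v => ?_⟩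
  refine (ContinuousMap.dist_le (by positivity)).2 fun t => ?_
  change _ ≤ (K * (b - a)) ^ n / n ! * dist u v
  refine (hF.dist_iterate_volterraMap_apply_le hab x₀ n u v t).trans ?_
  have := sub_nonneg.2 t.2.2
  gcongr
  exact t.2.1

theorem existsUnique_isFixedPt_volterraMap [CompleteSpace E] (hF : IsCaratheodoryLipschitz F K)
    (hab : a ≤ b) (x₀ : E) : ∃! u, IsFixedPt (hF.volterraMap hab x₀) u := by
  obtain ⟨n, L, hL⟩ := hF.exists_contractingWith_iterate_volterraMap hab x₀
  exact ⟨_, hL.isFixedPt_fixedPoint_iterate, fun v hv => hL.fixedPoint_unique (hv.iterate n)⟩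

end IsCaratheodoryLipschitz

end Volterra

section HSystem

attribute [local instance] Matrix.linftyOpNormedAddCommGroup

variable {ι : Type*} [Fintype ι]

theorem BddMeasOn.exists_norm_le {T : ℝ} {f : ℝ → ι → ℝ} (hf : BddMeasOn T f) :
    ∃ C, ∀ t ∈ Icc 0 T, ‖f t‖ ≤ C := by
  obtain ⟨-, C, hC⟩ := hf
  refine ⟨max C 0, fun t ht => (pi_norm_le_iff_of_nonneg (le_max_right _ _)).2 fun i => ?_⟩
  exact (Real.norm_eq_abs _ ▸ hC t ht i).trans (le_max_left _ _)

theorem dist_mul_add_mulVec_le (d : ι → ℝ) (A : Matrix ι ι ℝ) (v w : ι → ℝ) :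
    dist (d * v + A *ᵥ v) (d * w + A *ᵥ w) ≤ (‖d‖ + ‖A‖) * dist v w := by
  rw [dist_eq_norm, dist_eq_norm, add_sub_add_comm, ← mul_sub, ← mulVec_sub, add_mul]
  exact (norm_add_le _ _).trans (add_le_add (norm_mul_le _ _) (linfty_opNorm_mulVec _ _))

variable [DecidableEq ι]

noncomputable def hSystemCoupling (Q : Matrix ι ι ℝ) (p : ι → ℝ) : Matrix ι ι ℝ :=
  diagonal p⁻¹ * (diagonal (Q *ᵥ p) - Q * diagonal p)

noncomputable def hSystemField (Q : Matrix ι ι ℝ) (r P : ℝ → ι → ℝ) (t : ℝ) (v : ι → ℝ) :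
    ι → ℝ :=
  r t * v + hSystemCoupling Q (P t) *ᵥ v

theorem hSystemField_apply (Q : Matrix ι ι ℝ) (r P : ℝ → ι → ℝ) (t : ℝ) (v : ι → ℝ) (i : ι) :
    hSystemField Q r P t v i = v i * r t i - 1 / P t i * ∑ j, Q i j * P t j * v j
      + v i / P t i * ∑ j, Q i j * P t j := by
  simp only [hSystemField, hSystemCoupling, Pi.add_apply, Pi.mul_apply, ← mulVec_mulVec,
    mulVec_diagonal, sub_mulVec, Pi.sub_apply, Pi.inv_apply]
  simp only [mulVec, dotProduct, diagonal_apply, ite_mul, zero_mul, Finset.sum_ite_eq,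
    Finset.mem_univ, if_true, mul_assoc]
  ring

theorem continuous_hSystemCoupling {X : Type*} [TopologicalSpace X] (Q : Matrix ι ι ℝ)
    {p : X → ι → ℝ} (hp : Continuous p) (hp0 : ∀ x i, p x i ≠ 0) :
    Continuous fun x => hSystemCoupling Q (p x) := by
  have hinv : Continuous fun x => (p x)⁻¹ :=
    continuous_pi fun i => ((continuous_apply i).comp hp).inv₀ fun x => hp0 x i
  exact hinv.matrix_diagonal.matrix_mul ((continuous_const.matrix_mulVec hp).matrix_diagonal.sub
    (continuous_const.matrix_mul hp.matrix_diagonal))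

variable {T : ℝ} {Q : Matrix ι ι ℝ} {r P : ℝ → ι → ℝ}

theorem exists_isCaratheodoryLipschitz_hSystemField (hT : 0 ≤ T) (hr : BddMeasOn T r)
    (hPc : ∀ i, ContinuousOn (fun t => P t i) (Icc 0 T)) (hPpos : ∀ t ∈ Icc 0 T, ∀ i, 0 < P t i) :
    ∃ K, IsCaratheodoryLipschitz (fun s => hSystemField Q r P (projIcc 0 T hT s)) K := by
  have hB : Continuous fun t : Icc 0 T => hSystemCoupling Q (P t) :=
    continuous_hSystemCoupling Q (continuous_pi fun i => (hPc i).domRestrict)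
      fun t i => (hPpos t t.2 i).ne'
  obtain ⟨CB, hCB⟩ := (isCompact_range hB).isBounded.exists_norm_le
  obtain ⟨Cr, hCr⟩ := hr.exists_norm_le
  refine ⟨(Cr + CB).toNNReal, fun v => ?_, fun s => ?_, 0, fun s => by simp [hSystemField]⟩
  · have hrm : Measurable fun s => r (projIcc 0 T hT s) := measurable_pi_lambda _ fun i =>
      (hr.1 i).comp (continuous_subtype_val.comp continuous_projIcc).measurable
    exact ((hrm.mul_const v).add
      ((hB.comp continuous_projIcc).matrix_mulVec continuous_const).measurable).stronglyMeasurable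
  · refine LipschitzWith.of_dist_le' fun v w => (dist_mul_add_mulVec_le _ _ v w).trans ?_
    gcongr
    · exact hCr _ (projIcc 0 T hT s).2
    · exact hCB _ ⟨_, rfl⟩

theorem isHSol_iff_isFixedPt_volterraMap (hT : 0 ≤ T) {K : ℝ≥0}
    (hF : IsCaratheodoryLipschitz (fun s => hSystemField Q r P (projIcc 0 T hT s)) K)
    {H : ℝ → ι → ℝ} {u : C(Icc 0 T, ι → ℝ)} (hu : ∀ t : Icc 0 T, u t = H t) :
    IsHSol T Q r P H ↔ IsFixedPt (hF.volterraMap hT 1) u := by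
  have hcont : ∀ i, ContinuousOn (fun t => H t i) (Icc 0 T) := by
    have : ContinuousOn H (Icc 0 T) :=
      (continuous_IccExtend_iff.2 u.continuous).continuousOn.congr fun t ht => by
        rw [IccExtend_of_mem hT _ ht, hu]
    exact fun i => (continuous_apply i).comp_continuousOn this
  have hintegral : ∀ t ∈ Icc 0 T, ∀ i,
      (∫ s in t..T, hSystemField Q r P (projIcc 0 T hT s) (IccExtend hT u s)) i =
        ∫ s in t..T, (H s i * r s i - (1 / P s i) * ∑ j, Q i j * P s j * H s j
          + (H s i / P s i) * ∑ j, Q i j * P s j) := by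
    intro t ht i
    refine ((ContinuousLinearMap.proj i : (ι → ℝ) →L[ℝ] ℝ).intervalIntegral_comp_comm
      (hF.intervalIntegrable_comp hT u t T)).symm.trans (integral_congr fun s hs => ?_)
    rw [uIcc_of_le ht.2] at hs
    have hs' : s ∈ Icc 0 T := ⟨ht.1.trans hs.1, hs.2⟩
    simp [IccExtend_of_mem hT _ hs', projIcc_of_mem hT hs', hu, hSystemField_apply]
  simp only [IsHSol, hcont, implies_true, true_and, IsFixedPt, ContinuousMap.ext_iff, funext_iff,
    IsCaratheodoryLipschitz.volterraMap_apply, Pi.sub_apply, hu, Subtype.forall]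
  refine forall₂_congr fun t ht => forall_congr' fun i => ?_
  rw [Pi.one_apply, hintegral t ht i, eq_comm]

end HSystem

theorem h_system_exists_unique_general (m : ℕ) (T : ℝ) (hT : 0 < T)
    (Q : Matrix (Fin m) (Fin m) ℝ)
    (r : ℝ → Fin m → ℝ) (hr : BddMeasOn T r)
    (P : ℝ → Fin m → ℝ)
    (hPc : ∀ i, ContinuousOn (fun t => P t i) (Set.Icc 0 T))
    (hPpos : ∀ t ∈ Set.Icc (0:ℝ) T, ∀ i, 0 < P t i) :
    ∃ H : ℝ → Fin m → ℝ, IsHSol T Q r P H ∧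
      ∀ H' : ℝ → Fin m → ℝ, IsHSol T Q r P H' →
        ∀ t ∈ Set.Icc (0:ℝ) T, ∀ i, H' t i = H t i := by
  obtain ⟨K, hF⟩ := exists_isCaratheodoryLipschitz_hSystemField (Q := Q) hT.le hr hPc hPpos
  obtain ⟨u, hu, hu_unique⟩ := hF.existsUnique_isFixedPt_volterraMap hT.le 1
  refine ⟨IccExtend hT.le u,
    (isHSol_iff_isFixedPt_volterraMap hT.le hF fun t => (IccExtend_val _ _ t).symm).2 hu,
    fun H' hH' t ht i => ?_⟩
  let u' : C(Icc 0 T, Fin m → ℝ) :=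
    ⟨fun t => H' t, continuous_pi fun i => (hH'.1 i).domRestrict⟩
  have hu' : u' = u :=
    hu_unique u' ((isHSol_iff_isFixedPt_volterraMap hT.le hF fun _ => rfl).1 hH')
  rw [IccExtend_of_mem hT.le _ ht, ← hu']
  rfl

/-- For every `m ≥ 1`, `T > 0`, generator `Q`, bounded measurable
`r`, and continuous `P : [0,T] × {1,…,m} → (0,∞)`, the H-system associated with
`(r, Q, P)` has exactly one solution on `[0,T]`. -/
theorem h_system_exists_unique (m : ℕ) (hm : 1 ≤ m) (T : ℝ) (hT : 0 < T)
    (Q : Matrix (Fin m) (Fin m) ℝ) (hQ : IsGenerator Q)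
    (r : ℝ → Fin m → ℝ) (hr : BddMeasOn T r)
    (P : ℝ → Fin m → ℝ)
    (hPc : ∀ i, ContinuousOn (fun t => P t i) (Set.Icc 0 T))
    (hPpos : ∀ t ∈ Set.Icc (0:ℝ) T, ∀ i, 0 < P t i) :
    ∃ H : ℝ → Fin m → ℝ, IsHSol T Q r P H ∧
      ∀ H' : ℝ → Fin m → ℝ, IsHSol T Q r P H' →
        ∀ t ∈ Set.Icc (0:ℝ) T, ∀ i, H' t i = H t i :=
  h_system_exists_unique_general m T hT Q r hr P hPc hPpos
end

section
/- Let P be the unique solution of the P-system associated with (ρ, r, Q). Then P(t,i) ≥ exp(−∫_t^T (ρ(s,i) − 2r(s,i) − q_{ii}) ds) > 0 for all t ∈ [0,T] and all i = 1,…,m. If moreover ρ(t,i) ≥ 0 for all (t,i), then P(t,i) ≤ exp(2R(T−t)) for all t ∈ [0,T] and all i, where R = sup_{t,i} |r(t,i)|; in particular 0 < P(t,i) ≤ e^{2RT}, a bound that does not depend on the generator Q. -/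
open MeasureTheory Filter
open scoped BigOperators Topology

/-- `sup_{t ∈ [0,T], i} |r(t,i)|`. -/
noncomputable def supAbsOn {S : Type*} [Fintype S] (T : ℝ) (r : ℝ → S → ℝ) : ℝ :=
  sSup {x : ℝ | ∃ t ∈ Set.Icc (0:ℝ) T, ∃ i : S, x = |r t i|}

/-!
Since `ρ` and `r` are only measurable, `P` need not be differentiable, and both bounds are proved
as monotonicity statements on `[t, T]` through one-sided Dini derivatives, read off directly from
the integral equation.

Off the diagonal `Q` is nonnegative, so wherever `P > 0` the rate of `P(·,i)` is at most
`(ρ - 2r - q_ii) P(·,i)`. Hence `log P(t,i) + ∫_t^T (ρ - 2r - q_ii)` is nonincreasing on any final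
interval where `P > 0`, which is the lower bound there. Positivity on all of `[0,T]` follows by
looking at the last time `τ` at which some component of `P` is nonpositive: the lower bound on
`(τ, T]` passes to the limit at `τ` and contradicts it.

For the upper bound use the maximum principle: at a maximal component `i` the coupling
`∑_j q_ij P(t,j)` is nonpositive because the rows of `Q` sum to zero, so for `ρ ≥ 0` the maximum
`M(t)` of the components satisfies `D⁺ log M ≥ -2R`, whence `log M(t) ≤ 2R(T - t)`.
-/

open Set Finset

theorem antitoneOn_of_forall_eventually_sub_le {f : ℝ → ℝ} {a b : ℝ}
    (hf : ContinuousOn f (Icc a b))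
    (h : ∀ x ∈ Ico a b, ∀ ε > 0, ∀ᶠ z in 𝓝[>] x, f z - f x ≤ ε * (z - x)) :
    AntitoneOn f (Icc a b) := by
  intro x hx y hy hxy
  refine image_le_of_liminf_slope_right_le_deriv_boundary (hf.mono (Icc_subset_Icc_left hx.1))
    (B := fun _ => f x) (B' := fun _ => 0) le_rfl continuousOn_const
    (fun _ _ => hasDerivWithinAt_const _ _ _) (fun z hz ε hε => ?_) ⟨hxy, hy.2⟩
  refine Eventually.frequently ?_
  filter_upwards [h z ⟨hx.1.trans hz.1, hz.2⟩ (ε / 2) (half_pos hε), self_mem_nhdsWithin]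
    with w hw (hzw : z < w)
  rw [slope_def_field, div_lt_iff₀ (sub_pos.2 hzw)]
  nlinarith [sub_pos.2 hzw]

theorem eventually_integral_le_of_eventually_le {g : ℝ → ℝ} {x c : ℝ}
    (hint : ∀ᶠ z in 𝓝[>] x, IntervalIntegrable g volume x z)
    (hle : ∀ᶠ s in 𝓝[≥] x, g s ≤ c) :
    ∀ᶠ z in 𝓝[>] x, ∫ s in x..z, g s ≤ c * (z - x) := by
  obtain ⟨u, hxu, hu⟩ := mem_nhdsGE_iff_exists_Ico_subset.1 hle
  filter_upwards [hint, Ioo_mem_nhdsGT hxu] with z hz hzu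
  have := intervalIntegral.integral_mono_on hzu.1.le hz intervalIntegrable_const
    fun s hs => hu ⟨hs.1, hs.2.trans_lt hzu.2⟩
  rwa [intervalIntegral.integral_const, smul_eq_mul, mul_comm] at this

theorem MeasureTheory.IntegrableOn.eventually_intervalIntegrable {f : ℝ → ℝ} {a b x : ℝ}
    (hf : IntegrableOn f (Icc a b)) (hx : x ∈ Ico a b) :
    ∀ᶠ z in 𝓝[>] x, IntervalIntegrable f volume x z := by
  filter_upwards [Ioo_mem_nhdsGT hx.2] with z hz
  exact (hf.mono_set (uIcc_subset_Icc ⟨hx.1, hx.2.le⟩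
    ⟨hx.1.trans hz.1.le, hz.2.le⟩)).intervalIntegrable

theorem Real.log_sub_log_le_div {u v : ℝ} (hu : 0 < u) (hv : 0 < v) :
    Real.log v - Real.log u ≤ (v - u) / u := by
  rw [← Real.log_div hv.ne' hu.ne', sub_div, div_self hu.ne']
  exact Real.log_le_sub_one_of_pos (div_pos hv hu)

section Generator

variable {S : Type*} [Fintype S] {Q : Matrix S S ℝ} {v : S → ℝ} {i : S}

theorem diag_mul_le_sum_mul (hQ : ∀ i j, i ≠ j → 0 ≤ Q i j) (hv : ∀ j, 0 ≤ v j) :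
    Q i i * v i ≤ ∑ j, Q i j * v j := by
  classical
  rw [← sum_erase_add _ _ (mem_univ i)]
  exact le_add_of_nonneg_left <| sum_nonneg fun j hj =>
    mul_nonneg (hQ i j (ne_of_mem_erase hj).symm) (hv j)

theorem sum_mul_nonpos_of_forall_le (hQ : IsGenerator Q) (hv : ∀ j, v j ≤ v i) :
    ∑ j, Q i j * v j ≤ 0 := by
  have : ∑ j, Q i j * v j = ∑ j, Q i j * (v j - v i) := by
    simp only [mul_sub, sum_sub_distrib, ← sum_mul, hQ.2 i, zero_mul, sub_zero]
  rw [this]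
  refine sum_nonpos fun j _ => ?_
  rcases eq_or_ne i j with rfl | hij
  · simp
  · exact mul_nonpos_of_nonneg_of_nonpos (hQ.1 i j hij) (sub_nonpos.2 (hv j))

end Generator

section PSystem

variable {S : Type*} [Fintype S] {T : ℝ} {Q : Matrix S S ℝ} {ρ r P : ℝ → S → ℝ}

theorem BddMeasOn.integrableOn {f : ℝ → S → ℝ} (hf : BddMeasOn T f) (i : S) :
    IntegrableOn (fun t => f t i) (Icc 0 T) := by
  obtain ⟨hm, C, hC⟩ := hf
  exact Measure.integrableOn_of_bounded measure_Icc_lt_top.ne (hm i).aestronglyMeasurable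
    ((ae_restrict_iff' measurableSet_Icc).2 (ae_of_all _ fun t ht => hC t ht i))

theorem BddMeasOn.abs_le_supAbsOn (hr : BddMeasOn T r) {t : ℝ} (ht : t ∈ Icc 0 T) (i : S) :
    |r t i| ≤ supAbsOn T r := by
  obtain ⟨-, C, hC⟩ := hr
  exact le_csSup ⟨C, by rintro _ ⟨s, hs, j, rfl⟩; exact hC s hs j⟩ ⟨t, ht, i, rfl⟩

theorem BddMeasOn.sub_two_mul_sub_diag (hρ : BddMeasOn T ρ) (hr : BddMeasOn T r)
    (Q : Matrix S S ℝ) : BddMeasOn T fun t i => ρ t i - 2 * r t i - Q i i := by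
  obtain ⟨hρm, Cρ, hCρ⟩ := hρ
  obtain ⟨hrm, Cr, hCr⟩ := hr
  refine ⟨fun i => ((hρm i).sub ((hrm i).const_mul 2)).sub_const _,
    Cρ + 2 * Cr + ∑ j, |Q j j|, fun t ht i => ?_⟩
  have hQ := single_le_sum (fun j _ => abs_nonneg (Q j j)) (mem_univ i)
  have hρ := abs_le.1 (hCρ t ht i)
  have hr := abs_le.1 (hCr t ht i)
  have hQi := abs_le.1 (le_refl |Q i i|)
  exact abs_le.2 ⟨by linarith, by linarith⟩

namespace IsPSol

theorem integrableOn_rate (hP : IsPSol T Q ρ r P) (hρ : BddMeasOn T ρ) (hr : BddMeasOn T r)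
    (i : S) :
    IntegrableOn (fun s => P s i * (ρ s i - 2 * r s i) - ∑ j, Q i j * P s j) (Icc 0 T) :=
  (((hρ.integrableOn i).sub ((hr.integrableOn i).const_mul 2)).continuousOn_mul (hP.1 i)
    isCompact_Icc).sub (integrable_finsetSum _ fun j _ => (hP.1 j).integrableOn_Icc.const_mul _)

theorem apply_T_eq_one (hP : IsPSol T Q ρ r P) (hT : 0 ≤ T) (i : S) : P T i = 1 := by
  simp [hP.2 T ⟨hT, le_rfl⟩ i]

theorem sub_eq_integral (hP : IsPSol T Q ρ r P) (hρ : BddMeasOn T ρ) (hr : BddMeasOn T r)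
    {t t' : ℝ} (ht : t ∈ Icc 0 T) (ht' : t' ∈ Icc 0 T) (i : S) :
    P t' i - P t i = ∫ s in t..t', (P s i * (ρ s i - 2 * r s i) - ∑ j, Q i j * P s j) := by
  have hint {a b : ℝ} (ha : a ∈ Icc 0 T) (hb : b ∈ Icc 0 T) :=
    ((hP.integrableOn_rate hρ hr i).mono_set (uIcc_subset_Icc ha hb)).intervalIntegrable
  rw [hP.2 t ht i, hP.2 t' ht' i, ← intervalIntegral.integral_add_adjacent_intervals
    (hint ht ht') (hint ht' ⟨ht'.1.trans ht'.2, le_rfl⟩)]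
  ring

theorem eventually_log_add_integral_sub_le (hP : IsPSol T Q ρ r P)
    (hQ : ∀ i j, i ≠ j → 0 ≤ Q i j) (hρ : BddMeasOn T ρ) (hr : BddMeasOn T r) {x : ℝ}
    (hx : x ∈ Ico 0 T) (hpos : ∀ s ∈ Icc x T, ∀ j, 0 < P s j) (i : S) {ε : ℝ} (hε : 0 < ε) :
    ∀ᶠ z in 𝓝[>] x,
      (Real.log (P z i) + ∫ s in z..T, (ρ s i - 2 * r s i - Q i i)) -
        (Real.log (P x i) + ∫ s in x..T, (ρ s i - 2 * r s i - Q i i)) ≤ ε * (z - x) := by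
  have ha := hρ.sub_two_mul_sub_diag hr Q
  obtain ⟨C, hC⟩ := ha.2
  have hxT : Icc x T ⊆ Icc 0 T := Icc_subset_Icc_left hx.1
  have hp : 0 < P x i := hpos x ⟨le_rfl, hx.2.le⟩ i
  have hPx : Tendsto (fun s => C * |P s i - P x i|) (𝓝[≥] x) (𝓝 0) := by
    have hcont := ((hP.1 i).continuousWithinAt (hxT ⟨le_rfl, hx.2.le⟩)).mono_of_mem_nhdsWithin
      (mem_of_superset (Icc_mem_nhdsGE hx.2) hxT)
    simpa using (hcont.tendsto.sub_const (P x i)).abs.const_mul C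
  have hrate : ∀ᶠ s in 𝓝[≥] x, (P s i * (ρ s i - 2 * r s i) - ∑ j, Q i j * P s j) -
      P x i * (ρ s i - 2 * r s i - Q i i) ≤ ε * P x i := by
    filter_upwards [hPx.eventually_lt_const (mul_pos hε hp), Icc_mem_nhdsGE hx.2] with s hs hsI
    have hdiag := diag_mul_le_sum_mul (i := i) hQ fun j => (hpos s hsI j).le
    have hbound : (ρ s i - 2 * r s i - Q i i) * (P s i - P x i) ≤ C * |P s i - P x i| :=
      (le_abs_self _).trans <| (abs_mul _ _).trans_le <|
        mul_le_mul_of_nonneg_right (hC s (hxT hsI) i) (abs_nonneg _)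
    linarith
  have hF := (hP.integrableOn_rate hρ hr i).eventually_intervalIntegrable hx
  have haI := (ha.integrableOn i).eventually_intervalIntegrable hx
  filter_upwards [eventually_integral_le_of_eventually_le (hF.and haI |>.mono fun z h =>
    h.1.sub (h.2.const_mul (P x i))) hrate, hF, haI, Ioo_mem_nhdsGT hx.2] with z hz hFz haz hzT
  rw [intervalIntegral.integral_sub hFz (haz.const_mul _), intervalIntegral.integral_const_mul,
    ← hP.sub_eq_integral hρ hr (hxT ⟨le_rfl, hx.2.le⟩) (hxT ⟨hzT.1.le, hzT.2.le⟩)] at hz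
  have hlog := Real.log_sub_log_le_div hp (hpos z ⟨hzT.1.le, hzT.2.le⟩ i)
  have hsplit := intervalIntegral.integral_interval_sub_left
    ((ha.integrableOn i).mono_set (uIcc_subset_Icc (hxT ⟨le_rfl, hx.2.le⟩)
      ⟨hx.1.trans hx.2.le, le_rfl⟩)).intervalIntegrable haz
  have hdiv : (P z i - P x i) / P x i ≤ (∫ s in x..z, (ρ s i - 2 * r s i - Q i i)) +
      ε * (z - x) := by
    rw [div_le_iff₀ hp]
    linarith
  linarith

theorem exp_neg_integral_le (hP : IsPSol T Q ρ r P) (hQ : ∀ i j, i ≠ j → 0 ≤ Q i j)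
    (hρ : BddMeasOn T ρ) (hr : BddMeasOn T r) {t : ℝ} (ht : t ∈ Icc 0 T)
    (hpos : ∀ s ∈ Icc t T, ∀ j, 0 < P s j) (i : S) :
    Real.exp (-∫ s in t..T, (ρ s i - 2 * r s i - Q i i)) ≤ P t i := by
  have htT : Icc t T ⊆ Icc 0 T := Icc_subset_Icc_left ht.1
  have hcont : ContinuousOn (fun u => Real.log (P u i) + ∫ s in u..T, (ρ s i - 2 * r s i - Q i i))
      (Icc t T) := by
    refine (((hP.1 i).mono htT).log fun s hs => (hpos s hs i).ne').add ?_
    have := ((hρ.sub_two_mul_sub_diag hr Q).integrableOn i).mono_set htT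
    rw [← uIcc_of_le ht.2] at this ⊢
    exact intervalIntegral.continuousOn_primitive_interval_left this
  have hmono := antitoneOn_of_forall_eventually_sub_le hcont fun x hx ε hε =>
    hP.eventually_log_add_integral_sub_le hQ hρ hr ⟨ht.1.trans hx.1, hx.2⟩
      (fun s hs j => hpos s ⟨hx.1.trans hs.1, hs.2⟩ j) i hε
  have hlog := hmono (left_mem_Icc.2 ht.2) (right_mem_Icc.2 ht.2) ht.2
  simp only [hP.apply_T_eq_one (ht.1.trans ht.2), Real.log_one, intervalIntegral.integral_same,
    add_zero] at hlog
  rw [← Real.exp_log (hpos t (left_mem_Icc.2 ht.2) i)]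
  exact Real.exp_le_exp.2 (by linarith)

theorem pos (hP : IsPSol T Q ρ r P) (hQ : ∀ i j, i ≠ j → 0 ≤ Q i j) (hρ : BddMeasOn T ρ)
    (hr : BddMeasOn T r) {t : ℝ} (ht : t ∈ Icc 0 T) (i : S) : 0 < P t i := by
  by_contra! hti
  set Z := ⋃ j, Icc 0 T ∩ (fun u => P u j) ⁻¹' Iic 0
  have hZ : IsClosed Z := isClosed_iUnion_of_finite fun j =>
    (hP.1 j).preimage_isClosed_of_isClosed isClosed_Icc isClosed_Iic
  have hZT : BddAbove Z := ⟨T, by simp only [Z, upperBounds, mem_iUnion]; grind⟩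
  obtain ⟨j, hτ, hτj⟩ := mem_iUnion.1 (hZ.csSup_mem ⟨t, mem_iUnion.2 ⟨i, ht, hti⟩⟩ hZT)
  set τ := sSup Z
  have hτT : τ < T := hτ.2.lt_of_ne fun h => by
    norm_num [h, hP.apply_T_eq_one (hτ.1.trans hτ.2)] at hτj
  have hsub : Ioc τ T ⊆ Icc 0 T := fun s hs => ⟨hτ.1.trans hs.1.le, hs.2⟩
  have hafter : ∀ s ∈ Ioc τ T, ∀ u ∈ Icc s T, ∀ k, 0 < P u k := fun s hs u hu k =>
    lt_of_not_ge fun hk => hs.1.not_ge <| hu.1.trans <| le_csSup hZT <|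
      mem_iUnion.2 ⟨k, ⟨(hsub hs).1.trans hu.1, hu.2⟩, hk⟩
  have hlower : ∀ s ∈ Ioc τ T,
      Real.exp (-∫ u in s..T, (ρ u j - 2 * r u j - Q j j)) ≤ P s j := fun s hs =>
    hP.exp_neg_integral_le hQ hρ hr (hsub hs) (hafter s hs) j
  have hprim : ContinuousWithinAt
      (fun s => Real.exp (-∫ u in s..T, (ρ u j - 2 * r u j - Q j j))) (Ioc τ T) τ := by
    have := (hρ.sub_two_mul_sub_diag hr Q).integrableOn j
    rw [← uIcc_of_le (hτ.1.trans hτ.2)] at this hsub hτ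
    exact ((intervalIntegral.continuousOn_primitive_interval_left this).neg.rexp τ hτ).mono hsub
  have := hprim.closure_le (closure_Ioc hτT.ne ▸ left_mem_Icc.2 hτT.le)
    ((hP.1 j τ hτ).mono hsub) hlower
  exact (Real.exp_pos _).not_ge (this.trans hτj)

theorem eventually_neg_log_sup_sub_le [Nonempty S] (hP : IsPSol T Q ρ r P) (hQ : IsGenerator Q)
    (hρ : BddMeasOn T ρ) (hr : BddMeasOn T r) (hρ0 : ∀ t ∈ Icc 0 T, ∀ i, 0 ≤ ρ t i) {R : ℝ}
    (hR : ∀ t ∈ Icc 0 T, ∀ i, |r t i| ≤ R) (hpos : ∀ t ∈ Icc 0 T, ∀ i, 0 < P t i) {x : ℝ}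
    (hx : x ∈ Ico 0 T) {ε : ℝ} (hε : 0 < ε) :
    ∀ᶠ z in 𝓝[>] x,
      (-Real.log (univ.sup' univ_nonempty (P z)) - 2 * R * z) -
        (-Real.log (univ.sup' univ_nonempty (P x)) - 2 * R * x) ≤ ε * (z - x) := by
  have hx' : x ∈ Icc 0 T := ⟨hx.1, hx.2.le⟩
  have hIci : Icc 0 T ∈ 𝓝[≥] x := mem_of_superset (Icc_mem_nhdsGE hx.2) (Icc_subset_Icc_left hx.1)
  have hcont (j : S) : ContinuousWithinAt (fun s => P s j) (Ici x) x :=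
    ((hP.1 j).continuousWithinAt hx').mono_of_mem_nhdsWithin hIci
  obtain ⟨i, -, hi⟩ := exists_mem_eq_sup' univ_nonempty (P x)
  have hmax (j : S) : P x j ≤ P x i := hi ▸ le_sup' (P x) (mem_univ j)
  have hp := hpos x hx' i
  have hcoupling : ∀ᶠ s in 𝓝[≥] x,
      2 * R * P s i + ∑ j, Q i j * P s j < 2 * R * P x i + ε * P x i / 2 := by
    refine (((hcont i).const_mul (2 * R)).add (tendsto_finsetSum _ fun j _ =>
      (hcont j).const_mul (Q i j))).eventually_lt_const ?_
    simp only [Pi.add_apply]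
    linarith [sum_mul_nonpos_of_forall_le hQ hmax, mul_pos hε hp]
  have hrate : ∀ᶠ s in 𝓝[≥] x,
      -(P s i * (ρ s i - 2 * r s i) - ∑ j, Q i j * P s j) ≤ 2 * R * P x i + ε * P x i / 2 := by
    filter_upwards [hcoupling, hIci] with s hs hsI
    have hρs := mul_nonneg (hpos s hsI i).le (hρ0 s hsI i)
    have hrs := mul_le_mul_of_nonneg_left ((le_abs_self _).trans (hR s hsI i)) (hpos s hsI i).le
    linarith
  have hsup : ∀ᶠ z in 𝓝[>] x,
      2 * R * P x i + ε * P x i / 2 < (2 * R + ε) * univ.sup' univ_nonempty (P z) := by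
    refine ((ContinuousWithinAt.finset_sup'_apply univ_nonempty fun j _ =>
      hcont j).const_mul (2 * R + ε)).tendsto.mono_left (nhdsWithin_mono _ Ioi_subset_Ici_self)
      |>.eventually_const_lt ?_
    rw [hi]
    nlinarith
  filter_upwards [eventually_integral_le_of_eventually_le
    ((hP.integrableOn_rate hρ hr i).neg.eventually_intervalIntegrable hx) hrate, hsup,
    Ioo_mem_nhdsGT hx.2] with z hz hMz hzT
  have hz' : z ∈ Icc 0 T := ⟨hx.1.trans hzT.1.le, hzT.2.le⟩
  simp only [Pi.neg_apply, intervalIntegral.integral_neg] at hz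
  rw [← hP.sub_eq_integral hρ hr hx' hz'] at hz
  have hPz : P z i ≤ univ.sup' univ_nonempty (P z) := le_sup' (P z) (mem_univ i)
  have hMz0 := (hpos z hz' i).trans_le hPz
  have hlog := Real.log_sub_log_le_div hMz0 (hi ▸ hp)
  have hdiv : (univ.sup' univ_nonempty (P x) - univ.sup' univ_nonempty (P z)) /
      univ.sup' univ_nonempty (P z) ≤ (2 * R + ε) * (z - x) := by
    rw [div_le_iff₀ hMz0, hi]
    nlinarith [hzT.1]
  linarith

theorem le_exp (hP : IsPSol T Q ρ r P) (hQ : IsGenerator Q)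
    (hρ : BddMeasOn T ρ) (hr : BddMeasOn T r) (hρ0 : ∀ t ∈ Icc 0 T, ∀ i, 0 ≤ ρ t i) {R : ℝ}
    (hR : ∀ t ∈ Icc 0 T, ∀ i, |r t i| ≤ R) (hpos : ∀ t ∈ Icc 0 T, ∀ i, 0 < P t i) {t : ℝ}
    (ht : t ∈ Icc 0 T) (i : S) : P t i ≤ Real.exp (2 * R * (T - t)) := by
  have : Nonempty S := ⟨i⟩
  have htT : Icc t T ⊆ Icc 0 T := Icc_subset_Icc_left ht.1
  have hcont : ContinuousOn
      (fun u => -Real.log (univ.sup' univ_nonempty (P u)) - 2 * R * u) (Icc t T) := by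
    refine ((ContinuousOn.finset_sup'_apply univ_nonempty fun j _ => (hP.1 j).mono htT).log
      fun u hu => ?_).neg.sub (continuousOn_const.mul continuousOn_id)
    obtain ⟨j⟩ := ‹Nonempty S›
    exact ((hpos u (htT hu) j).trans_le (le_sup' (P u) (mem_univ j))).ne'
  have hmono := antitoneOn_of_forall_eventually_sub_le hcont fun x hx ε hε =>
    hP.eventually_neg_log_sup_sub_le hQ hρ hr hρ0 hR hpos ⟨ht.1.trans hx.1, hx.2⟩ hε
  have hlog := hmono (left_mem_Icc.2 ht.2) (right_mem_Icc.2 ht.2) ht.2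
  have hPT : P T = fun _ => 1 := funext (hP.apply_T_eq_one (ht.1.trans ht.2))
  simp only [hPT, sup'_const, Real.log_one] at hlog
  have hM0 := (hpos t ht i).trans_le (le_sup' (P t) (mem_univ i))
  calc P t i ≤ univ.sup' univ_nonempty (P t) := le_sup' (P t) (mem_univ i)
    _ = Real.exp (Real.log (univ.sup' univ_nonempty (P t))) := (Real.exp_log hM0).symm
    _ ≤ Real.exp (2 * R * (T - t)) := Real.exp_le_exp.2 (by linarith)

end IsPSol

end PSystem

theorem p_system_bounds_general (m : ℕ) (T : ℝ)
    (Q : Matrix (Fin m) (Fin m) ℝ) (hQ : IsGenerator Q)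
    (ρ r : ℝ → Fin m → ℝ) (hρ : BddMeasOn T ρ) (hr : BddMeasOn T r)
    (P : ℝ → Fin m → ℝ) (hP : IsPSol T Q ρ r P) :
    (∀ t ∈ Set.Icc (0:ℝ) T, ∀ i,
        Real.exp (-∫ s in t..T, (ρ s i - 2 * r s i - Q i i)) ≤ P t i ∧
        0 < Real.exp (-∫ s in t..T, (ρ s i - 2 * r s i - Q i i))) ∧
    ((∀ t ∈ Set.Icc (0:ℝ) T, ∀ i, 0 ≤ ρ t i) →
      ∀ t ∈ Set.Icc (0:ℝ) T, ∀ i,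
        P t i ≤ Real.exp (2 * supAbsOn T r * (T - t)) ∧
        0 < P t i ∧ P t i ≤ Real.exp (2 * supAbsOn T r * T)) := by
  have hpos : ∀ t ∈ Icc 0 T, ∀ i, 0 < P t i := fun t ht i => hP.pos hQ.1 hρ hr ht i
  refine ⟨fun t ht i => ⟨hP.exp_neg_integral_le hQ.1 hρ hr ht
    (fun s hs => hpos s ⟨ht.1.trans hs.1, hs.2⟩) i, Real.exp_pos _⟩, fun hρ0 t ht i => ?_⟩
  have hupper := hP.le_exp hQ hρ hr hρ0 (fun s hs => hr.abs_le_supAbsOn hs) hpos ht i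
  refine ⟨hupper, hpos t ht i, hupper.trans (Real.exp_le_exp.2 ?_)⟩
  have hR := (abs_nonneg _).trans (hr.abs_le_supAbsOn ht i)
  nlinarith [ht.1]

/-- the solution of the P-system satisfies
`P(t,i) ≥ exp(−∫_t^T (ρ(s,i) − 2r(s,i) − q_{ii}) ds) > 0`, and if `ρ ≥ 0` then
`P(t,i) ≤ exp(2R(T−t))` with `R = sup_{t,i} |r(t,i)|`; in particular
`0 < P(t,i) ≤ exp(2RT)`. -/
theorem p_system_bounds (m : ℕ) (hm : 1 ≤ m) (T : ℝ) (hT : 0 < T)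
    (Q : Matrix (Fin m) (Fin m) ℝ) (hQ : IsGenerator Q)
    (ρ r : ℝ → Fin m → ℝ) (hρ : BddMeasOn T ρ) (hr : BddMeasOn T r)
    (P : ℝ → Fin m → ℝ) (hP : IsPSol T Q ρ r P) :
    (∀ t ∈ Set.Icc (0:ℝ) T, ∀ i,
        Real.exp (-∫ s in t..T, (ρ s i - 2 * r s i - Q i i)) ≤ P t i ∧
        0 < Real.exp (-∫ s in t..T, (ρ s i - 2 * r s i - Q i i))) ∧
    ((∀ t ∈ Set.Icc (0:ℝ) T, ∀ i, 0 ≤ ρ t i) →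
      ∀ t ∈ Set.Icc (0:ℝ) T, ∀ i,
        P t i ≤ Real.exp (2 * supAbsOn T r * (T - t)) ∧
        0 < P t i ∧ P t i ≤ Real.exp (2 * supAbsOn T r * T)) :=
  p_system_bounds_general m T Q hQ ρ r hρ hr P hP
end

section
/- Under the two-time-scale structure, assume ρ, r : [0,T] × {1,…,m} → ℝ are bounded measurable, and for each ε > 0 let P^ε be the unique solution of the P-system associated with (ρ, r, Q^ε). Suppose that along some sequence ε_n → 0 the functions P^{ε_n} converge uniformly on [0,T] to a continuous function P^0 : [0,T] × {1,…,m} → ℝ. Then Q̃ P^0(t,·) = 0 for every t ∈ [0,T]; consequently, for each k = 1,…,l, the value P^0(t, s_{kj}) does not depend on j = 1,…,m_k. -/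
open MeasureTheory Filter
open scoped BigOperators Topology

/-- The kernel of `Q`, acting on column vectors, is spanned by the all-ones vector. -/
def KerSpannedByOnes {S : Type*} [Fintype S] (Q : Matrix S S ℝ) : Prop :=
  ∀ v : S → ℝ, Q.mulVec v = 0 → ∃ c : ℝ, ∀ j, v j = c
/-!
Integrating the P-system of `Q^ε = ε⁻¹ Q̃ + Q̂` over `[t, T]` and multiplying by `ε` gives
`Q̃ ∫_t^T P^ε = ε (P^ε(t) - 1 + ∫_t^T (P^ε (ρ - 2r) - Q̂ P^ε))`. Along `ε_n → 0` the bracket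
converges by uniform convergence, so the right side tends to `0`, while the left side tends to
`Q̃ ∫_t^T P⁰`. Differentiating `Q̃ ∫_t^T P⁰ = 0` in `t` gives `Q̃ P⁰(t) = 0`; as `Q̃` is block
diagonal and the kernel of each block is spanned by the ones vector, `P⁰(t, ·)` is constant on
each block.
-/

open Set Matrix

theorem eq_zero_of_forall_intervalIntegral_eq_zero {E : Type*} [NormedAddCommGroup E]
    [NormedSpace ℝ E] [CompleteSpace E] {f : ℝ → E} {a b : ℝ} (hab : a < b)
    (hf : ContinuousOn f (Icc a b)) (h : ∀ t ∈ Icc a b, ∫ s in t..b, f s = 0) :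
    ∀ t ∈ Icc a b, f t = 0 := by
  intro t ht
  have : Fact (t ∈ Icc a b) := ⟨ht⟩
  have hint : IntervalIntegrable f volume t b :=
    (hf.mono (Icc_subset_Icc ht.1 le_rfl)).intervalIntegrable_of_Icc ht.2
  have hderiv : HasDerivWithinAt (fun u => ∫ s in u..b, f s) (-f t) (Icc a b) t :=
    intervalIntegral.integral_hasDerivWithinAt_left hint
      ⟨Icc a b, self_mem_nhdsWithin, hf.aestronglyMeasurable measurableSet_Icc⟩ (hf t ht)
  have hzero : HasDerivWithinAt (fun u => ∫ s in u..b, f s) 0 (Icc a b) t :=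
    (hasDerivWithinAt_const t _ 0).congr h (h t ht)
  simpa using (uniqueDiffOn_Icc hab t ht).eq_deriv _ hderiv hzero

theorem tendsto_intervalIntegral_mul_of_tendstoUniformlyOn {ι : Type*} {l : Filter ι}
    {F : ι → ℝ → ℝ} {f g : ℝ → ℝ} {a b : ℝ} (hab : a ≤ b)
    (hF : ∀ n, ContinuousOn (F n) (Icc a b)) (hf : ContinuousOn f (Icc a b))
    (hg : IntervalIntegrable g volume a b) (hFf : TendstoUniformlyOn F f l (Icc a b)) :
    Tendsto (fun n => ∫ x in a..b, F n x * g x) l (𝓝 (∫ x in a..b, f x * g x)) := by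
  rw [← uIcc_of_le hab] at hF hf
  set I := ∫ x in a..b, |g x|
  have hI : 0 ≤ I := intervalIntegral.integral_nonneg hab fun _ _ => abs_nonneg _
  rw [Metric.tendsto_nhds]
  intro ε hε
  have hδ : 0 < ε / (I + 1) := by positivity
  filter_upwards [Metric.tendstoUniformlyOn_iff.1 hFf _ hδ] with n hn
  have hdiff : ∀ᵐ x, x ∈ Ioc a b → ‖F n x * g x - f x * g x‖ ≤ ε / (I + 1) * |g x| := by
    refine Eventually.of_forall fun x hx => ?_
    rw [← sub_mul, norm_mul, Real.norm_eq_abs, Real.norm_eq_abs, abs_sub_comm]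
    exact mul_le_mul_of_nonneg_right (hn x (Ioc_subset_Icc_self hx)).le (abs_nonneg _)
  calc dist (∫ x in a..b, F n x * g x) (∫ x in a..b, f x * g x)
      = ‖∫ x in a..b, (F n x * g x - f x * g x)‖ := by
        rw [dist_eq_norm, intervalIntegral.integral_sub (hg.continuousOn_mul (hF n))
          (hg.continuousOn_mul hf)]
    _ ≤ ∫ x in a..b, ε / (I + 1) * |g x| :=
        intervalIntegral.norm_integral_le_of_norm_le hab hdiff (hg.abs.const_mul _)
    _ = ε / (I + 1) * I := intervalIntegral.integral_const_mul _ _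
    _ < ε := by
        rw [div_mul_eq_mul_div, div_lt_iff₀ (by positivity)]
        linarith

theorem BddMeasOn.intervalIntegrable {S : Type*} [Fintype S] {T : ℝ} {f : ℝ → S → ℝ}
    (hf : BddMeasOn T f) {t : ℝ} (ht : t ∈ Icc 0 T) (i : S) :
    IntervalIntegrable (fun s => f s i) volume t T := by
  obtain ⟨hmeas, C, hC⟩ := hf
  rw [intervalIntegrable_iff_integrableOn_Ioc_of_le ht.2]
  refine Measure.integrableOn_of_bounded measure_Ioc_lt_top.ne
    (hmeas i).aestronglyMeasurable (M := C) ((ae_restrict_iff' measurableSet_Ioc).2 ?_)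
  exact Eventually.of_forall fun s hs => hC s ⟨ht.1.trans hs.1.le, hs.2⟩ i

theorem Matrix.mulVec_intervalIntegral_apply {S : Type*} [Fintype S] (A : Matrix S S ℝ)
    {f : ℝ → S → ℝ} {a b : ℝ} (hf : ∀ j, IntervalIntegrable (fun s => f s j) volume a b)
    (i : S) : (A *ᵥ fun j => ∫ s in a..b, f s j) i = ∫ s in a..b, (A *ᵥ f s) i := by
  simp only [Matrix.mulVec, dotProduct]
  rw [intervalIntegral.integral_finsetSum fun j _ => (hf j).const_mul (A i j)]
  simp only [intervalIntegral.integral_const_mul]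

theorem continuousOn_mulVec_apply {S : Type*} [Fintype S] {P : ℝ → S → ℝ} {s : Set ℝ}
    (hP : ∀ j, ContinuousOn (fun t => P t j) s) (M : Matrix S S ℝ) (i : S) :
    ContinuousOn (fun t => (M *ᵥ P t) i) s :=
  continuousOn_finsetSum _ fun j _ => continuousOn_const.mul (hP j)

section PSystem

variable {S : Type*} [Fintype S] {T : ℝ} {ρ r : ℝ → S → ℝ}

theorem BddMeasOn.intervalIntegrable_sub_two_mul (hρ : BddMeasOn T ρ) (hr : BddMeasOn T r)
    {t : ℝ} (ht : t ∈ Icc 0 T) (i : S) :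
    IntervalIntegrable (fun s => ρ s i - 2 * r s i) volume t T :=
  (hρ.intervalIntegrable ht i).sub ((hr.intervalIntegrable ht i).const_mul 2)

theorem IsPSol.intervalIntegrable {Q : Matrix S S ℝ} {P : ℝ → S → ℝ} (hP : IsPSol T Q ρ r P)
    {t : ℝ} (ht : t ∈ Icc 0 T) (j : S) : IntervalIntegrable (fun s => P s j) volume t T :=
  ((hP.1 j).mono (Icc_subset_Icc ht.1 le_rfl)).intervalIntegrable_of_Icc ht.2

theorem IsPSol.intervalIntegrable_mul {Q : Matrix S S ℝ} {P : ℝ → S → ℝ}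
    (hP : IsPSol T Q ρ r P) (hρ : BddMeasOn T ρ) (hr : BddMeasOn T r) {t : ℝ}
    (ht : t ∈ Icc 0 T) (i : S) :
    IntervalIntegrable (fun s => P s i * (ρ s i - 2 * r s i)) volume t T :=
  (hρ.intervalIntegrable_sub_two_mul hr ht i).continuousOn_mul
    (by rw [uIcc_of_le ht.2]; exact (hP.1 i).mono (Icc_subset_Icc ht.1 le_rfl))

theorem IsPSol.intervalIntegrable_mulVec {Q : Matrix S S ℝ} {P : ℝ → S → ℝ}
    (hP : IsPSol T Q ρ r P) {t : ℝ} (ht : t ∈ Icc 0 T) (M : Matrix S S ℝ) (i : S) :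
    IntervalIntegrable (fun s => (M *ᵥ P s) i) volume t T :=
  ((continuousOn_mulVec_apply hP.1 M i).mono
    (Icc_subset_Icc ht.1 le_rfl)).intervalIntegrable_of_Icc ht.2

theorem IsPSol.mulVec_intervalIntegral_eq {A B : Matrix S S ℝ} {ε : ℝ} (hε : ε ≠ 0) {P : ℝ → S → ℝ}
    (hP : IsPSol T ((1 / ε) • A + B) ρ r P) (hρ : BddMeasOn T ρ) (hr : BddMeasOn T r)
    {t : ℝ} (ht : t ∈ Icc 0 T) (i : S) :
    (A *ᵥ fun j => ∫ s in t..T, P s j) i =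
      ε * (P t i - 1 + (∫ s in t..T, P s i * (ρ s i - 2 * r s i))
        - (B *ᵥ fun j => ∫ s in t..T, P s j) i) := by
  have hPint := hP.intervalIntegrable ht
  have hsum : ∀ s, ∑ j, ((1 / ε) • A + B) i j * P s j
      = 1 / ε * (A *ᵥ P s) i + (B *ᵥ P s) i := by
    intro s
    simp only [Matrix.mulVec, dotProduct, Matrix.add_apply, Matrix.smul_apply, smul_eq_mul,
      Finset.mul_sum, ← Finset.sum_add_distrib]
    exact Finset.sum_congr rfl fun j _ => by ring
  have heq := hP.2 t ht i
  simp only [hsum] at heq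
  rw [intervalIntegral.integral_sub (hP.intervalIntegrable_mul hρ hr ht i)
      (((hP.intervalIntegrable_mulVec ht A i).const_mul _).add
        (hP.intervalIntegrable_mulVec ht B i)),
    intervalIntegral.integral_add ((hP.intervalIntegrable_mulVec ht A i).const_mul _)
      (hP.intervalIntegrable_mulVec ht B i), intervalIntegral.integral_const_mul,
    ← A.mulVec_intervalIntegral_apply hPint, ← B.mulVec_intervalIntegral_apply hPint] at heq
  rw [heq]
  field_simp
  ring

theorem mulVec_eq_zero_of_tendstoUniformlyOn_isPSol {ι : Type*} {l : Filter ι} [l.NeBot]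
    (hT : 0 < T) (hρ : BddMeasOn T ρ) (hr : BddMeasOn T r) {A B : Matrix S S ℝ}
    {ε : ι → ℝ} (hε : ∀ n, ε n ≠ 0) (hε0 : Tendsto ε l (𝓝 0)) {P : ι → ℝ → S → ℝ}
    (hP : ∀ n, IsPSol T ((1 / ε n) • A + B) ρ r (P n)) {P₀ : ℝ → S → ℝ}
    (hP₀ : ∀ i, ContinuousOn (fun t => P₀ t i) (Icc 0 T))
    (hPP₀ : ∀ i, TendstoUniformlyOn (fun n t => P n t i) (fun t => P₀ t i) l (Icc 0 T)) :
    ∀ t ∈ Icc 0 T, A *ᵥ P₀ t = 0 := by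
  have hsub : ∀ {t}, t ∈ Icc 0 T → Icc t T ⊆ Icc 0 T := fun ht => Icc_subset_Icc ht.1 le_rfl
  have hlim : ∀ {t}, t ∈ Icc 0 T → ∀ i {g : ℝ → ℝ}, IntervalIntegrable g volume t T →
      Tendsto (fun n => ∫ s in t..T, P n s i * g s) l (𝓝 (∫ s in t..T, P₀ s i * g s)) :=
    fun ht i _ hg => tendsto_intervalIntegral_mul_of_tendstoUniformlyOn ht.2
      (fun n => ((hP n).1 i).mono (hsub ht)) ((hP₀ i).mono (hsub ht)) hg
      ((hPP₀ i).mono (hsub ht))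
  have hJ : ∀ t ∈ Icc 0 T, Tendsto (fun n j => ∫ s in t..T, P n s j) l
      (𝓝 fun j => ∫ s in t..T, P₀ s j) := fun t ht =>
    tendsto_pi_nhds.2 fun j => by simpa using hlim ht j (g := fun _ => 1) intervalIntegrable_const
  have hAJ : ∀ t ∈ Icc 0 T, (A *ᵥ fun j => ∫ s in t..T, P₀ s j) = 0 := by
    intro t ht
    ext i
    have hcont : ∀ M : Matrix S S ℝ, Continuous fun v : S → ℝ => (M *ᵥ v) i := fun _ =>
      (continuous_apply i).comp (continuous_const.matrix_mulVec continuous_id)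
    have hslow : Tendsto (fun n => ε n * (P n t i - 1
        + (∫ s in t..T, P n s i * (ρ s i - 2 * r s i))
        - (B *ᵥ fun j => ∫ s in t..T, P n s j) i)) l (𝓝 0) := by
      simpa using hε0.mul (((((hPP₀ i).tendsto_at ht).sub_const 1).add
        (hlim ht i (hρ.intervalIntegrable_sub_two_mul hr ht i))).sub
        (((hcont B).tendsto _).comp (hJ t ht)))
    refine tendsto_nhds_unique (((hcont A).tendsto _).comp (hJ t ht)) (hslow.congr fun n => ?_)
    exact ((hP n).mulVec_intervalIntegral_eq (hε n) hρ hr ht i).symm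
  intro t ht
  ext i
  refine eq_zero_of_forall_intervalIntegral_eq_zero hT (continuousOn_mulVec_apply hP₀ A i)
    (fun t ht => ?_) t ht
  rw [← A.mulVec_intervalIntegral_apply
    fun j => ((hP₀ j).mono (hsub ht)).intervalIntegrable_of_Icc ht.2, hAJ t ht, Pi.zero_apply]

end PSystem

section Block

variable {κ : Type*} [Fintype κ] {n : κ → Type*} [∀ k, Fintype (n k)]
  {A : Matrix (Σ k, n k) (Σ k, n k) ℝ}

theorem mulVec_sigma_apply_of_offDiag_eq_zero (hA : ∀ p q : Σ k, n k, p.1 ≠ q.1 → A p q = 0)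
    (v : (Σ k, n k) → ℝ) (k : κ) (i : n k) :
    (A *ᵥ v) ⟨k, i⟩ = (A.blockDiag' k *ᵥ fun j => v ⟨k, j⟩) i := by
  simp only [Matrix.mulVec, dotProduct, Fintype.sum_sigma, Matrix.blockDiag'_apply]
  refine Fintype.sum_eq_single k fun k' hk' => Finset.sum_eq_zero fun j _ => ?_
  rw [hA _ _ (Ne.symm hk'), zero_mul]

theorem apply_eq_of_mulVec_eq_zero_of_offDiag_eq_zero
    (hA : ∀ p q : Σ k, n k, p.1 ≠ q.1 → A p q = 0)
    (hker : ∀ k, KerSpannedByOnes (A.blockDiag' k)) {v : (Σ k, n k) → ℝ} (hv : A *ᵥ v = 0)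
    (k : κ) (j j' : n k) : v ⟨k, j⟩ = v ⟨k, j'⟩ := by
  obtain ⟨c, hc⟩ := hker k _ (funext fun i => by
    rw [← mulVec_sigma_apply_of_offDiag_eq_zero hA, hv, Pi.zero_apply, Pi.zero_apply])
  rw [hc j, hc j']

end Block

theorem two_scale_limit_block_constant_general
    (l : ℕ) (mk : Fin l → ℕ)
    (T : ℝ) (hT : 0 < T)
    (Qt Qh : Matrix (Σ k : Fin l, Fin (mk k)) (Σ k : Fin l, Fin (mk k)) ℝ)
    (hQtblock : ∀ p q : Σ k : Fin l, Fin (mk k), p.1 ≠ q.1 → Qt p q = 0)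
    (hQtker : ∀ k : Fin l,
      KerSpannedByOnes (Matrix.of fun i j : Fin (mk k) => Qt ⟨k, i⟩ ⟨k, j⟩))
    (ρ r : ℝ → (Σ k : Fin l, Fin (mk k)) → ℝ)
    (hρ : BddMeasOn T ρ) (hr : BddMeasOn T r)
    (Pe : ℝ → ℝ → (Σ k : Fin l, Fin (mk k)) → ℝ)
    (hPe : ∀ ε : ℝ, 0 < ε → IsPSol T ((1 / ε) • Qt + Qh) ρ r (Pe ε))
    (en : ℕ → ℝ) (hen_pos : ∀ n, 0 < en n) (hen : Tendsto en atTop (𝓝 0))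
    (P0 : ℝ → (Σ k : Fin l, Fin (mk k)) → ℝ)
    (hP0c : ∀ i, ContinuousOn (fun t => P0 t i) (Set.Icc 0 T))
    (hconv : ∀ i, TendstoUniformlyOn (fun n t => Pe (en n) t i)
      (fun t => P0 t i) atTop (Set.Icc 0 T)) :
    ∀ t ∈ Set.Icc (0:ℝ) T,
      Qt.mulVec (P0 t) = 0 ∧
      ∀ k : Fin l, ∀ j j' : Fin (mk k), P0 t ⟨k, j⟩ = P0 t ⟨k, j'⟩ := by
  intro t ht
  have hker : Qt *ᵥ P0 t = 0 :=
    mulVec_eq_zero_of_tendstoUniformlyOn_isPSol hT hρ hr (fun n => (hen_pos n).ne') hen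
      (fun n => hPe _ (hen_pos n)) hP0c hconv t ht
  exact ⟨hker, apply_eq_of_mulVec_eq_zero_of_offDiag_eq_zero hQtblock hQtker hker⟩

/-- if along a sequence `ε_n → 0` the solutions `P^{ε_n}` of the
P-systems associated with `(ρ, r, Q^{ε_n})` converge uniformly on `[0,T]` to a
continuous `P^0`, then `Q̃ P^0(t,·) = 0` for every `t ∈ [0,T]`; consequently
`P^0(t, s_{kj})` does not depend on `j` within each block `k`. -/
theorem two_scale_limit_block_constant
    (l : ℕ) (hl : 1 ≤ l) (mk : Fin l → ℕ) (hmk : ∀ k, 1 ≤ mk k)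
    (T : ℝ) (hT : 0 < T)
    (Qt Qh : Matrix (Σ k : Fin l, Fin (mk k)) (Σ k : Fin l, Fin (mk k)) ℝ)
    (hQtblock : ∀ p q : Σ k : Fin l, Fin (mk k), p.1 ≠ q.1 → Qt p q = 0)
    (hQtgen : ∀ k : Fin l,
      IsGenerator (Matrix.of fun i j : Fin (mk k) => Qt ⟨k, i⟩ ⟨k, j⟩))
    (hQtker : ∀ k : Fin l,
      KerSpannedByOnes (Matrix.of fun i j : Fin (mk k) => Qt ⟨k, i⟩ ⟨k, j⟩))
    (hQh : IsGenerator Qh)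
    (ρ r : ℝ → (Σ k : Fin l, Fin (mk k)) → ℝ)
    (hρ : BddMeasOn T ρ) (hr : BddMeasOn T r)
    (Pe : ℝ → ℝ → (Σ k : Fin l, Fin (mk k)) → ℝ)
    (hPe : ∀ ε : ℝ, 0 < ε → IsPSol T ((1 / ε) • Qt + Qh) ρ r (Pe ε))
    (en : ℕ → ℝ) (hen_pos : ∀ n, 0 < en n) (hen : Tendsto en atTop (𝓝 0))
    (P0 : ℝ → (Σ k : Fin l, Fin (mk k)) → ℝ)
    (hP0c : ∀ i, ContinuousOn (fun t => P0 t i) (Set.Icc 0 T))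
    (hconv : ∀ i, TendstoUniformlyOn (fun n t => Pe (en n) t i)
      (fun t => P0 t i) atTop (Set.Icc 0 T)) :
    ∀ t ∈ Set.Icc (0:ℝ) T,
      Qt.mulVec (P0 t) = 0 ∧
      ∀ k : Fin l, ∀ j j' : Fin (mk k), P0 t ⟨k, j⟩ = P0 t ⟨k, j'⟩ :=
  two_scale_limit_block_constant_general l mk T hT Qt Qh hQtblock hQtker ρ r hρ hr Pe hPe en hen_pos
    hen P0 hP0c hconv
end

section
/- Let m_1,…,m_l be positive integers with Σ_{k=1}^l m_k = m, let Q̂ ∈ ℝ^{m×m} be a generator, and for each k = 1,…,l let μ^k = (μ^k_1,…,μ^k_{m_k}) be a row vector with nonnegative entries summing to 1. Then the matrix Q̄ = diag(μ^1,…,μ^l) Q̂ diag(𝟙_{m_1},…,𝟙_{m_l}) ∈ ℝ^{l×l}, where 𝟙_n ∈ ℝ^{n×1} is the column vector of ones, is itself a generator. -/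
open MeasureTheory Filter
open scoped BigOperators Topology

/-- if `Q̂` is a generator on the aggregate state space
`{s_{kj} : k = 1,…,l, j = 1,…,m_k}` and each `μ^k` is a probability row vector,
then `Q̄ = diag(μ^1,…,μ^l) Q̂ diag(𝟙_{m_1},…,𝟙_{m_l})`, whose `(k,k')` entry is
`Σ_j Σ_{j'} μ^k_j Q̂_{(k,j),(k',j')}`, is itself a generator. -/
theorem qbar_is_generator
    (l : ℕ) (hl : 1 ≤ l) (mk : Fin l → ℕ) (hmk : ∀ k, 1 ≤ mk k)
    (Qh : Matrix (Σ k : Fin l, Fin (mk k)) (Σ k : Fin l, Fin (mk k)) ℝ)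
    (hQh : IsGenerator Qh)
    (μ : (k : Fin l) → Fin (mk k) → ℝ)
    (hμnonneg : ∀ k j, 0 ≤ μ k j) (hμsum : ∀ k, ∑ j, μ k j = 1) :
    IsGenerator
      (Matrix.of fun k k' : Fin l => ∑ j, ∑ j', μ k j * Qh ⟨k, j⟩ ⟨k', j'⟩) := by
  constructor
  · intro k k' hkk'
    simp only [Matrix.of_apply]
    apply Finset.sum_nonneg; intro j _
    apply Finset.sum_nonneg; intro j' _
    exact mul_nonneg (hμnonneg k j)
      (hQh.1 ⟨k, j⟩ ⟨k', j'⟩ (by simp [Sigma.ext_iff]; intro h; exact absurd h hkk'))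
  · intro k
    simp only [Matrix.of_apply]
    rw [Finset.sum_comm]
    have : ∀ j : Fin (mk k), ∑ k' : Fin l, ∑ j', μ k j * Qh ⟨k, j⟩ ⟨k', j'⟩ = 0 := by
      intro j
      simp only [← Finset.mul_sum]
      have h := hQh.2 ⟨k, j⟩
      rw [← Finset.univ_sigma_univ, Finset.sum_sigma] at h
      rw [h, mul_zero]
    simp [this]
end

section
/- Under the transient-state structure, the matrix Q̃_* is invertible, every entry of the vector a_{m_k} = −Q̃_*^{-1} Q̃^k_* 𝟙_{m_k} ∈ ℝ^{m_*} is nonnegative for each k = 1,…,l, and Σ_{k=1}^l a_{m_k} = 𝟙_{m_*} entrywise, i.e., Σ_{k=1}^l a_{m_k,j} = 1 for every j = 1,…,m_*. -/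
open MeasureTheory Filter
open scoped BigOperators Topology

/-- `A` is Hurwitz: every (complex) eigenvalue of `A` has negative real part. -/
def IsHurwitz {n : ℕ} (A : Matrix (Fin n) (Fin n) ℝ) : Prop :=
  ∀ z : ℂ, z ∈ spectrum ℂ (A.map Complex.ofReal) → z.re < 0

/-- For the transient-state structure (states `(Σ k, Fin (m_k)) ⊕ Fin m_*`, with
`Q̃_*` the transient-transient block and `Q̃^k_*` the transient-to-block-`k` block
of `Q̃`), the vector `a_{m_k} = -Q̃_*⁻¹ Q̃^k_* 𝟙_{m_k} ∈ ℝ^{m_*}`. -/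
noncomputable def aVec (l : ℕ) (mk : Fin l → ℕ) (ms : ℕ)
    (Qt : Matrix ((Σ k : Fin l, Fin (mk k)) ⊕ Fin ms)
      ((Σ k : Fin l, Fin (mk k)) ⊕ Fin ms) ℝ) (k : Fin l) : Fin ms → ℝ :=
  -((Matrix.of fun i j : Fin ms => Qt (Sum.inr i) (Sum.inr j))⁻¹.mulVec
      fun j => ∑ i : Fin (mk k), Qt (Sum.inr j) (Sum.inl ⟨k, i⟩))


/-!
Since `Q̃_*` is Hurwitz, `0` is not an eigenvalue, so `Q̃_*` is invertible. The vector `a_{m_k}`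
solves `Q̃_* a = -Q̃^k_* 𝟙 ≤ 0`, and `Q̃_*` has nonnegative off-diagonal entries and nonpositive
row sums (it is the transient block of a generator). This gives a minimum principle: at a negative
minimum of `a`, the equation forces every row in the level set of the minimum to vanish outside
that set and to sum to zero, which makes `Q̃_*` singular. Finally, since the rows of `Q̃` sum to
zero, `Σ_k Q̃^k_* 𝟙 = -Q̃_* 𝟙`, hence `Σ_k a_{m_k} = 𝟙`.
-/

open Matrix

theorem IsHurwitz.isUnit_det {n : ℕ} {A : Matrix (Fin n) (Fin n) ℝ} (hA : IsHurwitz A) :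
    IsUnit A.det := by
  have h0 : (0 : ℂ) ∉ spectrum ℂ (A.map Complex.ofReal) := fun h => (hA 0 h).false
  rw [spectrum.zero_mem_iff, not_not, isUnit_iff_isUnit_det,
    show A.map Complex.ofReal = Complex.ofRealHom.mapMatrix A from rfl,
    ← RingHom.map_det, isUnit_iff_ne_zero] at h0
  exact isUnit_iff_ne_zero.mpr fun h => h0 (by simp [h])

section MinimumPrinciple

variable {ι : Type*} [Fintype ι]

/-- `A` is block triangular with respect to `S`, and its block on `S` kills the all-ones vector. -/
theorem Matrix.det_eq_zero_of_closed_rows_sum_zero [DecidableEq ι] {K : Type*} [Field K]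
    (A : Matrix ι ι K) {S : Set ι} [DecidablePred (· ∈ S)] (hS : S.Nonempty)
    (hclosed : ∀ i ∈ S, ∀ j ∉ S, A i j = 0) (hsum : ∀ i ∈ S, ∑ j, A i j = 0) : A.det = 0 := by
  obtain ⟨i₀, hi₀⟩ := hS
  rw [A.twoBlockTriangular_det' (· ∈ S) hclosed]
  refine mul_eq_zero_of_left (exists_mulVec_eq_zero_iff.mp
    ⟨1, fun h => one_ne_zero (congrFun h ⟨i₀, hi₀⟩), ?_⟩) _
  funext ⟨i, hi⟩
  have hout : ∑ j : {j // j ∉ S}, A i j = 0 :=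
    Finset.sum_eq_zero fun j _ => hclosed i hi j j.2
  simpa [mulVec, dotProduct, toSquareBlockProp, toBlock, hout, hsum i hi] using
    Fintype.sum_subtype_add_sum_subtype (· ∈ S) (A i)

variable {A : Matrix ι ι ℝ}

theorem row_eq_zero_off_argmin (hoff : ∀ i j, i ≠ j → 0 ≤ A i j) (hrow : ∀ i, ∑ j, A i j ≤ 0)
    {x : ι → ℝ} {j : ι} (hmin : ∀ m, x j ≤ x m) (hneg : x j < 0) (hAx : (A *ᵥ x) j ≤ 0) :
    (∀ m, x m ≠ x j → A j m = 0) ∧ ∑ m, A j m = 0 := by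
  have hterm : ∀ m, 0 ≤ A j m * (x m - x j) := fun m => by
    rcases eq_or_ne j m with rfl | hjm
    · simp
    · exact mul_nonneg (hoff j m hjm) (sub_nonneg.mpr (hmin m))
  have hexpand : ∑ m, A j m * (x m - x j) = (A *ᵥ x) j - (∑ m, A j m) * x j := by
    simp only [mulVec, dotProduct, mul_sub, Finset.sum_sub_distrib, Finset.sum_mul]
  have hprod : 0 ≤ (∑ m, A j m) * x j := mul_nonneg_of_nonpos_of_nonpos (hrow j) hneg.le
  have hzero : ∑ m, A j m * (x m - x j) = 0 := by
    linarith [Finset.sum_nonneg fun m (_ : m ∈ Finset.univ) => hterm m]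
  refine ⟨fun m hm => ?_, ?_⟩
  · have := (Finset.sum_eq_zero_iff_of_nonneg fun m _ => hterm m).mp hzero m (Finset.mem_univ m)
    exact (mul_eq_zero.mp this).resolve_right (sub_ne_zero.mpr hm)
  · exact (mul_eq_zero.mp (by linarith : (∑ m, A j m) * x j = 0)).resolve_right hneg.ne

theorem nonneg_of_mulVec_nonpos [DecidableEq ι] (hoff : ∀ i j, i ≠ j → 0 ≤ A i j)
    (hrow : ∀ i, ∑ j, A i j ≤ 0) (hdet : A.det ≠ 0) {x : ι → ℝ} (hAx : ∀ i, (A *ᵥ x) i ≤ 0) :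
    ∀ i, 0 ≤ x i := by
  classical
  by_contra! ⟨j, hj⟩
  obtain ⟨i₀, -, hi₀⟩ := Finset.exists_min_image Finset.univ x ⟨j, Finset.mem_univ j⟩
  have hrowS : ∀ i, x i = x i₀ → (∀ m, x m ≠ x i → A i m = 0) ∧ ∑ m, A i m = 0 := by
    intro i hi
    refine row_eq_zero_off_argmin hoff hrow (fun m => ?_) ?_ (hAx i) <;> rw [hi]
    · exact hi₀ m (Finset.mem_univ m)
    · exact (hi₀ j (Finset.mem_univ j)).trans_lt hj
  refine hdet (A.det_eq_zero_of_closed_rows_sum_zero (S := {m | x m = x i₀}) ⟨i₀, rfl⟩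
    (fun i hi m hm => (hrowS i hi).1 m ?_) fun i hi => (hrowS i hi).2)
  exact fun h => hm (h.trans hi)

end MinimumPrinciple

namespace IsGenerator

variable {α β : Type*} [Fintype α] [Fintype β] {Q : Matrix (α ⊕ β) (α ⊕ β) ℝ}

theorem toBlocks₂₂_nonneg_of_ne (hQ : IsGenerator Q) {i j : β} (hij : i ≠ j) :
    0 ≤ Q.toBlocks₂₂ i j :=
  hQ.1 _ _ (Sum.inr_injective.ne hij)

theorem toBlocks₂₁_nonneg (hQ : IsGenerator Q) (i : β) (a : α) : 0 ≤ Q.toBlocks₂₁ i a :=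
  hQ.1 _ _ Sum.inr_ne_inl

theorem sum_toBlocks₂₁_eq_neg_sum_toBlocks₂₂ (hQ : IsGenerator Q) (i : β) :
    ∑ a, Q.toBlocks₂₁ i a = -∑ j, Q.toBlocks₂₂ i j :=
  eq_neg_of_add_eq_zero_left ((Fintype.sum_sum_type _).symm.trans (hQ.2 (Sum.inr i)))

theorem sum_toBlocks₂₂_nonpos (hQ : IsGenerator Q) (i : β) : ∑ j, Q.toBlocks₂₂ i j ≤ 0 := by
  rw [← neg_nonneg, ← hQ.sum_toBlocks₂₁_eq_neg_sum_toBlocks₂₂]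
  exact Finset.sum_nonneg fun a _ => hQ.toBlocks₂₁_nonneg i a

end IsGenerator

section Absorption

variable {κ β : Type*} {τ : κ → Type*} [∀ k, Fintype (τ k)]

/-- `rateInto Q k = Q̃^k_* 𝟙`. -/
def rateInto (Q : Matrix ((Σ k, τ k) ⊕ β) ((Σ k, τ k) ⊕ β) ℝ) (k : κ) (i : β) : ℝ :=
  ∑ t, Q.toBlocks₂₁ i ⟨k, t⟩

variable [Fintype β] [DecidableEq β] {Q : Matrix ((Σ k, τ k) ⊕ β) ((Σ k, τ k) ⊕ β) ℝ}

noncomputable def absorptionProb (Q : Matrix ((Σ k, τ k) ⊕ β) ((Σ k, τ k) ⊕ β) ℝ) (k : κ) :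
    β → ℝ :=
  -(Q.toBlocks₂₂⁻¹ *ᵥ rateInto Q k)

theorem toBlocks₂₂_mulVec_absorptionProb (h : IsUnit Q.toBlocks₂₂.det) (k : κ) :
    Q.toBlocks₂₂ *ᵥ absorptionProb Q k = -rateInto Q k := by
  rw [absorptionProb, mulVec_neg, mulVec_mulVec, mul_nonsing_inv _ h, one_mulVec]

theorem absorptionProb_nonneg [Fintype κ] (hQ : IsGenerator Q) (h : IsUnit Q.toBlocks₂₂.det)
    (k : κ) (i : β) : 0 ≤ absorptionProb Q k i :=
  nonneg_of_mulVec_nonpos (fun _ _ => hQ.toBlocks₂₂_nonneg_of_ne) hQ.sum_toBlocks₂₂_nonpos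
    h.ne_zero (fun j => by
      rw [toBlocks₂₂_mulVec_absorptionProb h, Pi.neg_apply, neg_nonpos]
      exact Finset.sum_nonneg fun t _ => hQ.toBlocks₂₁_nonneg j _) i

theorem sum_absorptionProb [Fintype κ] (hQ : IsGenerator Q) (h : IsUnit Q.toBlocks₂₂.det) :
    ∑ k, absorptionProb Q k = 1 := by
  have hrates : ∑ k, rateInto Q k = -(Q.toBlocks₂₂ *ᵥ 1) := by
    funext i
    simp [rateInto, ← hQ.sum_toBlocks₂₁_eq_neg_sum_toBlocks₂₂, Fintype.sum_sigma, mulVec,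
      dotProduct]
  simp only [absorptionProb]
  rw [Finset.sum_neg_distrib, ← mulVec_sum, hrates, mulVec_neg, neg_neg, mulVec_mulVec,
    nonsing_inv_mul _ h, one_mulVec]

end Absorption

theorem aVec_nonneg_sum_one_general
    (l : ℕ) (mk : Fin l → ℕ)
    (ms : ℕ)
    (Qt : Matrix ((Σ k : Fin l, Fin (mk k)) ⊕ Fin ms)
      ((Σ k : Fin l, Fin (mk k)) ⊕ Fin ms) ℝ)
    (hQtgen : IsGenerator Qt)
    (hQtHurwitz : IsHurwitz
      (Matrix.of fun i j : Fin ms => Qt (Sum.inr i) (Sum.inr j))) :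
    IsUnit (Matrix.of fun i j : Fin ms => Qt (Sum.inr i) (Sum.inr j)).det ∧
    (∀ (k : Fin l) (j : Fin ms), 0 ≤ aVec l mk ms Qt k j) ∧
    (∀ j : Fin ms, ∑ k : Fin l, aVec l mk ms Qt k j = 1) := by
  have hunit : IsUnit Qt.toBlocks₂₂.det := hQtHurwitz.isUnit_det
  exact ⟨hunit, absorptionProb_nonneg hQtgen hunit, fun j =>
    (Finset.sum_apply j _ _).symm.trans (congrFun (sum_absorptionProb hQtgen hunit) j)⟩

/-- under the transient-state structure, `Q̃_*` is invertible,
each vector `a_{m_k} = -Q̃_*⁻¹ Q̃^k_* 𝟙_{m_k}` has nonnegative entries, and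
`Σ_{k=1}^l a_{m_k} = 𝟙_{m_*}` entrywise. -/
theorem aVec_nonneg_sum_one
    (l : ℕ) (hl : 1 ≤ l) (mk : Fin l → ℕ) (hmk : ∀ k, 1 ≤ mk k)
    (ms : ℕ) (hms : 1 ≤ ms)
    (Qt : Matrix ((Σ k : Fin l, Fin (mk k)) ⊕ Fin ms)
      ((Σ k : Fin l, Fin (mk k)) ⊕ Fin ms) ℝ)
    (hQtgen : IsGenerator Qt)
    (hQtUR : ∀ (p : Σ k : Fin l, Fin (mk k)) (j : Fin ms),
      Qt (Sum.inl p) (Sum.inr j) = 0)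
    (hQtblock : ∀ p q : Σ k : Fin l, Fin (mk k), p.1 ≠ q.1 →
      Qt (Sum.inl p) (Sum.inl q) = 0)
    (hQtblkgen : ∀ k : Fin l, IsGenerator
      (Matrix.of fun i j : Fin (mk k) => Qt (Sum.inl ⟨k, i⟩) (Sum.inl ⟨k, j⟩)))
    (hQtblkker : ∀ k : Fin l, KerSpannedByOnes
      (Matrix.of fun i j : Fin (mk k) => Qt (Sum.inl ⟨k, i⟩) (Sum.inl ⟨k, j⟩)))
    (hQtHurwitz : IsHurwitz
      (Matrix.of fun i j : Fin ms => Qt (Sum.inr i) (Sum.inr j))) :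
    IsUnit (Matrix.of fun i j : Fin ms => Qt (Sum.inr i) (Sum.inr j)).det ∧
    (∀ (k : Fin l) (j : Fin ms), 0 ≤ aVec l mk ms Qt k j) ∧
    (∀ j : Fin ms, ∑ k : Fin l, aVec l mk ms Qt k j = 1) :=
  aVec_nonneg_sum_one_general l mk ms Qt hQtgen hQtHurwitz
end

section
/- Under the transient-state structure, if v ∈ ℝ^m satisfies Q̃ v = 0, then there exist constants c_1,…,c_l such that v(s_{kj}) = c_k for all k = 1,…,l and j = 1,…,m_k, and v(s_{*j}) = Σ_{k=1}^l a_{m_k,j} c_k for all j = 1,…,m_*. -/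
open MeasureTheory Filter
open scoped BigOperators Topology

lemma hurwitz_isUnit_det {n : ℕ} (A : Matrix (Fin n) (Fin n) ℝ) (hA : IsHurwitz A) :
    IsUnit A.det := by
  rw [isUnit_iff_ne_zero]
  intro hdet
  have h0 : (0 : ℂ) ∈ spectrum ℂ (A.map Complex.ofReal) := by
    rw [spectrum.mem_iff]
    intro hu
    rw [map_zero, zero_sub, Matrix.isUnit_iff_isUnit_det, Matrix.det_neg] at hu
    have hd : (A.map Complex.ofReal).det = 0 := by
      have := (Complex.ofRealHom.map_det A).symm
      simp only [RingHom.mapMatrix_apply] at this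
      rw [show (A.map Complex.ofReal) = (A.map Complex.ofRealHom) from rfl, this, hdet]
      simp
    rw [hd] at hu
    exact (isUnit_iff_ne_zero.mp hu) (by ring)
  have := hA 0 h0
  simp at this

/-- under the transient-state structure, any `v ∈ ker Q̃` is
constant on each recurrent block, `v(s_{kj}) = c_k`, and on the transient states
`v(s_{*j}) = Σ_k a_{m_k,j} c_k`. -/
theorem kernel_structure_transient
    (l : ℕ) (hl : 1 ≤ l) (mk : Fin l → ℕ) (hmk : ∀ k, 1 ≤ mk k)
    (ms : ℕ) (hms : 1 ≤ ms)
    (Qt : Matrix ((Σ k : Fin l, Fin (mk k)) ⊕ Fin ms)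
      ((Σ k : Fin l, Fin (mk k)) ⊕ Fin ms) ℝ)
    (hQtgen : IsGenerator Qt)
    (hQtUR : ∀ (p : Σ k : Fin l, Fin (mk k)) (j : Fin ms),
      Qt (Sum.inl p) (Sum.inr j) = 0)
    (hQtblock : ∀ p q : Σ k : Fin l, Fin (mk k), p.1 ≠ q.1 →
      Qt (Sum.inl p) (Sum.inl q) = 0)
    (hQtblkgen : ∀ k : Fin l, IsGenerator
      (Matrix.of fun i j : Fin (mk k) => Qt (Sum.inl ⟨k, i⟩) (Sum.inl ⟨k, j⟩)))
    (hQtblkker : ∀ k : Fin l, KerSpannedByOnes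
      (Matrix.of fun i j : Fin (mk k) => Qt (Sum.inl ⟨k, i⟩) (Sum.inl ⟨k, j⟩)))
    (hQtHurwitz : IsHurwitz
      (Matrix.of fun i j : Fin ms => Qt (Sum.inr i) (Sum.inr j)))
    (v : ((Σ k : Fin l, Fin (mk k)) ⊕ Fin ms) → ℝ)
    (hv : Qt.mulVec v = 0) :
    ∃ c : Fin l → ℝ,
      (∀ (k : Fin l) (j : Fin (mk k)), v (Sum.inl ⟨k, j⟩) = c k) ∧
      (∀ j : Fin ms, v (Sum.inr j) = ∑ k : Fin l, aVec l mk ms Qt k j * c k) := by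
  classical
  set A : Matrix (Fin ms) (Fin ms) ℝ :=
    Matrix.of fun i j : Fin ms => Qt (Sum.inr i) (Sum.inr j) with hA
  set b : Fin l → Fin ms → ℝ :=
    fun k j => ∑ i : Fin (mk k), Qt (Sum.inr j) (Sum.inl ⟨k, i⟩) with hb
  -- Block equations on recurrent blocks
  have hblk : ∀ k : Fin l,
      (Matrix.of fun i j : Fin (mk k) =>
        Qt (Sum.inl ⟨k, i⟩) (Sum.inl ⟨k, j⟩)).mulVec
        (fun j => v (Sum.inl ⟨k, j⟩)) = 0 := by
    intro k
    funext i
    have h := congrFun hv (Sum.inl ⟨k, i⟩)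
    simp only [Matrix.mulVec, dotProduct, Pi.zero_apply,
      Fintype.sum_sum_type] at h ⊢
    rw [← Finset.univ_sigma_univ, Finset.sum_sigma, Finset.sum_eq_single k] at h
    · simpa [hQtUR] using h
    · intro k' _ hk'
      apply Finset.sum_eq_zero
      intro j _
      rw [hQtblock ⟨k, i⟩ ⟨k', j⟩ (by simpa using hk'.symm)]
      ring
    · intro hk; exact absurd (Finset.mem_univ k) hk
  choose c hc using fun k => hQtblkker k _ (hblk k)
  refine ⟨c, fun k j => hc k j, ?_⟩
  -- Transient part
  have hdet : IsUnit A.det := hurwitz_isUnit_det A hQtHurwitz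
  have hAv : A.mulVec (fun j => v (Sum.inr j)) =
      fun j => -(∑ k : Fin l, c k * b k j) := by
    funext j
    have h := congrFun hv (Sum.inr j)
    simp only [Matrix.mulVec, dotProduct, Pi.zero_apply,
      Fintype.sum_sum_type] at h ⊢
    rw [← Finset.univ_sigma_univ, Finset.sum_sigma] at h
    have hrec : ∀ k' : Fin l, ∑ i : Fin (mk k'),
        Qt (Sum.inr j) (Sum.inl ⟨k', i⟩) * v (Sum.inl ⟨k', i⟩)
        = c k' * b k' j := by
      intro k'
      rw [hb, Finset.mul_sum]
      exact Finset.sum_congr rfl fun i _ => by rw [hc k' i]; ring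
    rw [Finset.sum_congr rfl fun k' _ => hrec k'] at h
    simp only [hA, Matrix.of_apply]
    linarith [h]
  have hvs : ∀ j, v (Sum.inr j) =
      (A⁻¹.mulVec (fun j => -(∑ k : Fin l, c k * b k j))) j := by
    intro j
    have h1 : A⁻¹ * A = 1 := Matrix.nonsing_inv_mul A hdet
    have h2 : A⁻¹.mulVec (A.mulVec (fun j => v (Sum.inr j)))
        = fun j => v (Sum.inr j) := by
      rw [Matrix.mulVec_mulVec, h1, Matrix.one_mulVec]
    rw [← hAv]
    exact (congrFun h2 j).symm
  intro j
  rw [hvs j]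
  have haV : ∀ k : Fin l, aVec l mk ms Qt k = fun j => -((A⁻¹.mulVec (b k)) j) := by
    intro k; rfl
  simp only [Matrix.mulVec, dotProduct, haV]
  calc ∑ x : Fin ms, A⁻¹ j x * -∑ k : Fin l, c k * b k x
      = -∑ x : Fin ms, ∑ k : Fin l, A⁻¹ j x * (c k * b k x) := by
        rw [← Finset.sum_neg_distrib]
        exact Finset.sum_congr rfl fun x _ => by rw [mul_neg, Finset.mul_sum]
    _ = -∑ k : Fin l, ∑ x : Fin ms, A⁻¹ j x * (c k * b k x) := by rw [Finset.sum_comm]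
    _ = ∑ k : Fin l, (-∑ x : Fin ms, A⁻¹ j x * b k x) * c k := by
        rw [← Finset.sum_neg_distrib]
        refine Finset.sum_congr rfl fun k _ => ?_
        rw [neg_mul, Finset.sum_mul, ← Finset.sum_neg_distrib, ← Finset.sum_neg_distrib]
        exact Finset.sum_congr rfl fun x _ => by ring
end

section
/- Under the transient-state structure, let Q̂ ∈ ℝ^{m×m} be a generator partitioned as [[Q̂^{11}, Q̂^{12}],[Q̂^{21}, Q̂^{22}]] with Q̂^{11} ∈ ℝ^{(m−m_*)×(m−m_*)}, and for each k = 1,…,l let μ^k be a row vector with nonnegative entries summing to 1 satisfying μ^k Q̃^k = 0. Then the matrix Q̄_* = diag(μ^1,…,μ^l)(Q̂^{11} 𝟙̃ + Q̂^{12}(a_{m_1},…,a_{m_l})) ∈ ℝ^{l×l}, where 𝟙̃ = diag(𝟙_{m_1},…,𝟙_{m_l}), is a generator. -/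
open MeasureTheory Filter
open scoped BigOperators Topology

/-!
`Q̄_*` is `diag(μ^1,…,μ^l) (Q̂ L)` with `L = [𝟙̃; (a_{m_1},…,a_{m_l})]`. Since `Q̃ 𝟙 = 0`, the rows
of `L` sum to one, so the rows of `Q̂ L` sum to zero. The entries of `L` are nonnegative: `Q̃_*` is
invertible with nonnegative off-diagonal entries and nonpositive row sums, and for such a matrix
`-Q̃_*⁻¹ ≥ 0`. This holds by a minimum principle when the row sums are strictly negative, hence for
`Q̃_* - ε I`, and passes to the limit `ε → 0`. So `(Q̂ L)_{s k} ≥ 0` wherever `L_{s k} = 0`, in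
particular off the diagonal blocks, and averaging rows with the weights `μ^k ≥ 0` keeps both
properties.
-/

open Matrix

section Metzler

variable {n : Type*} [Fintype n] {B : Matrix n n ℝ}

theorem nonneg_of_mulVec_nonpos_s12 (hoff : ∀ i j, i ≠ j → 0 ≤ B i j)
    (hrow : ∀ i, ∑ j, B i j < 0) {x : n → ℝ} (hx : ∀ i, (B *ᵥ x) i ≤ 0) (i : n) :
    0 ≤ x i := by
  by_contra! hi
  obtain ⟨i₀, -, hmin⟩ := Finset.exists_min_image Finset.univ x ⟨i, Finset.mem_univ i⟩
  have hneg : x i₀ < 0 := (hmin i (Finset.mem_univ i)).trans_lt hi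
  have hle : (∑ j, B i₀ j) * x i₀ ≤ (B *ᵥ x) i₀ := by
    rw [Finset.sum_mul]
    refine Finset.sum_le_sum fun j _ => ?_
    rcases eq_or_ne j i₀ with rfl | hj
    · exact le_rfl
    · exact mul_le_mul_of_nonneg_left (hmin j (Finset.mem_univ j)) (hoff i₀ j hj.symm)
  nlinarith [hx i₀, hrow i₀]

theorem det_ne_zero_of_rowSum_neg [DecidableEq n] (hoff : ∀ i j, i ≠ j → 0 ≤ B i j)
    (hrow : ∀ i, ∑ j, B i j < 0) : B.det ≠ 0 := by
  intro hdet
  obtain ⟨v, hv, hBv⟩ := exists_mulVec_eq_zero_iff.mpr hdet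
  have hpos := nonneg_of_mulVec_nonpos_s12 hoff hrow (x := v) (by simp [hBv])
  have hneg := nonneg_of_mulVec_nonpos_s12 hoff hrow (x := -v) (by simp [mulVec_neg, hBv])
  exact hv (funext fun i => le_antisymm (by simpa using hneg i) (hpos i))

theorem neg_inv_mulVec_nonneg [DecidableEq n] (hoff : ∀ i j, i ≠ j → 0 ≤ B i j)
    (hrow : ∀ i, ∑ j, B i j ≤ 0) (hdet : B.det ≠ 0) {b : n → ℝ} (hb : ∀ i, 0 ≤ b i)
    (i : n) : 0 ≤ (-(B⁻¹ *ᵥ b)) i := by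
  set f : ℝ → ℝ := fun ε => (-((B - ε • 1)⁻¹ *ᵥ b)) i
  have hcont : ContinuousAt f 0 := by
    have hinv : ContinuousAt (fun ε : ℝ => (B - ε • 1)⁻¹) 0 := by
      refine ContinuousAt.comp (f := fun ε : ℝ => B - ε • 1) ?_ (by fun_prop)
      refine continuousAt_matrix_inv _ ?_
      simpa [Ring.inverse_eq_inv'] using continuousAt_inv₀ hdet
    exact ((continuous_apply i).comp (continuous_id.matrix_mulVec continuous_const)).neg
      |>.continuousAt.comp hinv
  have hpos : ∀ ε > 0, 0 ≤ f ε := by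
    intro ε hε
    have hoffε : ∀ p q, p ≠ q → 0 ≤ (B - ε • 1) p q := fun p q hpq => by
      simpa [one_apply_ne hpq] using hoff p q hpq
    have hrowε : ∀ p, ∑ q, (B - ε • 1) p q < 0 := fun p => by
      simp only [Matrix.sub_apply, Matrix.smul_apply, one_apply, smul_eq_mul, mul_ite, mul_one, mul_zero,
        Finset.sum_sub_distrib, Finset.sum_ite_eq, Finset.mem_univ, ↓reduceIte, sub_neg]
      linarith [hrow p, hε]
    have hunit : IsUnit (B - ε • 1).det := (det_ne_zero_of_rowSum_neg hoffε hrowε).isUnit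
    refine nonneg_of_mulVec_nonpos_s12 (x := -((B - ε • 1)⁻¹ *ᵥ b)) hoffε hrowε (fun p => ?_) i
    simp [mulVec_neg, mulVec_mulVec, mul_nonsing_inv _ hunit, hb p]
  simpa [f] using ge_of_tendsto (hcont.tendsto.mono_left nhdsWithin_le_nhds)
    (eventually_nhdsWithin_of_forall (s := Set.Ioi 0) hpos)

end Metzler

theorem IsHurwitz.det_ne_zero {d : ℕ} {A : Matrix (Fin d) (Fin d) ℝ} (h : IsHurwitz A) :
    A.det ≠ 0 := by
  intro hdet
  have hmap : (A.map Complex.ofReal).det = 0 := by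
    have := RingHom.map_det Complex.ofRealHom A
    rw [hdet, map_zero] at this
    exact this.symm
  have hzero : (0 : ℂ) ∈ spectrum ℂ (A.map Complex.ofReal) := by
    rw [spectrum.zero_mem_iff, isUnit_iff_isUnit_det, hmap]
    exact not_isUnit_zero
  simpa using h 0 hzero

theorem sum_neg_inv_mulVec_eq_one {R n ι : Type*} [CommRing R] [Fintype n] [DecidableEq n]
    [Fintype ι] {A : Matrix n n R} (hA : IsUnit A.det) {b : ι → n → R}
    (hb : ∑ k, b k = -(A *ᵥ 1)) : ∑ k, -(A⁻¹ *ᵥ b k) = 1 := by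
  rw [Finset.sum_neg_distrib, ← mulVec_sum, hb, mulVec_neg, neg_neg, mulVec_mulVec,
    nonsing_inv_mul _ hA, one_mulVec]

namespace IsGenerator

variable {S ι : Type*} [Fintype S] {Q : Matrix S S ℝ}

theorem sum_comp_nonpos (hQ : IsGenerator Q) {T : Type*} [Fintype T] {e : T → S}
    (he : Function.Injective e) (i : T) : ∑ j, Q (e i) (e j) ≤ 0 := by
  calc ∑ j, Q (e i) (e j) = ∑ s ∈ Finset.univ.map ⟨e, he⟩, Q (e i) s := by simp
    _ ≤ ∑ s, Q (e i) s := Finset.sum_le_sum_of_subset_of_nonneg (Finset.subset_univ _)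
        fun s _ hs => hQ.1 _ _ fun h => hs (h ▸ Finset.mem_map_of_mem _ (Finset.mem_univ i))
    _ = 0 := hQ.2 _

theorem mul_apply_nonneg (hQ : IsGenerator Q) {A : Matrix S ι ℝ} (hA : ∀ s k, 0 ≤ A s k)
    {s : S} {k : ι} (hsk : A s k = 0) : 0 ≤ (Q * A) s k :=
  Finset.sum_nonneg fun t _ => by
    rcases eq_or_ne s t with rfl | hst
    · simp [hsk]
    · exact mul_nonneg (hQ.1 s t hst) (hA t k)

theorem sum_mul_apply_eq_zero [Fintype ι] (hQ : IsGenerator Q) {A : Matrix S ι ℝ}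
    (hA : ∀ s, ∑ k, A s k = 1) (s : S) : ∑ k, (Q * A) s k = 0 := by
  simp only [mul_apply, Finset.sum_comm (γ := ι), ← Finset.mul_sum, hA, mul_one]
  exact hQ.2 s

end IsGenerator

section Lumping

variable {l : ℕ} {mk : Fin l → ℕ} {ms : ℕ}
  {Qt : Matrix ((Σ k : Fin l, Fin (mk k)) ⊕ Fin ms) ((Σ k : Fin l, Fin (mk k)) ⊕ Fin ms) ℝ}

theorem aVec_nonneg (hQt : IsGenerator Qt)
    (hdet : (Matrix.of fun i j : Fin ms => Qt (Sum.inr i) (Sum.inr j)).det ≠ 0)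
    (k : Fin l) (j : Fin ms) : 0 ≤ aVec l mk ms Qt k j :=
  neg_inv_mulVec_nonneg (fun _ _ hij => hQt.1 _ _ (Sum.inr_injective.ne hij))
    (hQt.sum_comp_nonpos Sum.inr_injective) hdet
    (fun _ => Finset.sum_nonneg fun _ _ => hQt.1 _ _ Sum.inr_ne_inl) j

theorem sum_aVec_eq_one (hQt : IsGenerator Qt)
    (hdet : (Matrix.of fun i j : Fin ms => Qt (Sum.inr i) (Sum.inr j)).det ≠ 0)
    (j : Fin ms) : ∑ k, aVec l mk ms Qt k j = 1 := by
  have hb : ∑ k, (fun i => ∑ p : Fin (mk k), Qt (Sum.inr i) (Sum.inl ⟨k, p⟩)) =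
      -((Matrix.of fun i j : Fin ms => Qt (Sum.inr i) (Sum.inr j)) *ᵥ 1) := by
    funext i
    have hrow := hQt.2 (Sum.inr i)
    rw [Fintype.sum_sum_type, Fintype.sum_sigma] at hrow
    simp only [Finset.sum_apply, Pi.neg_apply, mulVec, dotProduct, Pi.one_apply, mul_one,
      of_apply]
    linarith
  simp only [aVec]
  simpa [Finset.sum_apply] using congrFun (sum_neg_inv_mulVec_eq_one hdet.isUnit hb) j

variable (l mk ms Qt) in
/-- The block matrix `[𝟙̃; (a_{m_1},…,a_{m_l})]`, so that
`Q̂^{11} 𝟙̃ + Q̂^{12} (a_{m_1},…,a_{m_l}) = Q̂ * lumpingMatrix`. -/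
noncomputable def lumpingMatrix : Matrix ((Σ k : Fin l, Fin (mk k)) ⊕ Fin ms) (Fin l) ℝ :=
  fromRows (of fun p k => if p.1 = k then 1 else 0) (of fun j k => aVec l mk ms Qt k j)

theorem lumpingMatrix_nonneg (hQt : IsGenerator Qt)
    (hdet : (Matrix.of fun i j : Fin ms => Qt (Sum.inr i) (Sum.inr j)).det ≠ 0) :
    ∀ s k, 0 ≤ lumpingMatrix l mk ms Qt s k := by
  rintro (p | j) k
  · simp only [lumpingMatrix, fromRows_apply_inl, of_apply]
    split_ifs <;> norm_num
  · exact aVec_nonneg hQt hdet k j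

theorem sum_lumpingMatrix_eq_one (hQt : IsGenerator Qt)
    (hdet : (Matrix.of fun i j : Fin ms => Qt (Sum.inr i) (Sum.inr j)).det ≠ 0) :
    ∀ s, ∑ k, lumpingMatrix l mk ms Qt s k = 1 := by
  rintro (p | j)
  · simp [lumpingMatrix]
  · exact sum_aVec_eq_one hQt hdet j

theorem lumpingMatrix_inl_of_ne {k k' : Fin l} (h : k ≠ k') (j : Fin (mk k)) :
    lumpingMatrix l mk ms Qt (Sum.inl ⟨k, j⟩) k' = 0 := by
  simp [lumpingMatrix, h]

theorem mul_lumpingMatrix_apply (Qh : Matrix ((Σ k : Fin l, Fin (mk k)) ⊕ Fin ms)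
      ((Σ k : Fin l, Fin (mk k)) ⊕ Fin ms) ℝ) (s : (Σ k : Fin l, Fin (mk k)) ⊕ Fin ms)
    (k' : Fin l) :
    (Qh * lumpingMatrix l mk ms Qt) s k' =
      (∑ j' : Fin (mk k'), Qh s (Sum.inl ⟨k', j'⟩)) +
        ∑ j'' : Fin ms, Qh s (Sum.inr j'') * aVec l mk ms Qt k' j'' := by
  simp only [mul_apply, lumpingMatrix, Fintype.sum_sum_type, Fintype.sum_sigma, fromRows_apply_inl,
    fromRows_apply_inr, of_apply, mul_ite, mul_one, mul_zero]
  rw [Finset.sum_eq_single k' (fun k _ hk => by simp [hk]) (by simp)]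
  simp

end Lumping

theorem qbar_star_is_generator_general
    (l : ℕ) (mk : Fin l → ℕ)
    (ms : ℕ)
    (Qt : Matrix ((Σ k : Fin l, Fin (mk k)) ⊕ Fin ms)
      ((Σ k : Fin l, Fin (mk k)) ⊕ Fin ms) ℝ)
    (hQtgen : IsGenerator Qt)
    (hQtHurwitz : IsHurwitz
      (Matrix.of fun i j : Fin ms => Qt (Sum.inr i) (Sum.inr j)))
    (Qh : Matrix ((Σ k : Fin l, Fin (mk k)) ⊕ Fin ms)
      ((Σ k : Fin l, Fin (mk k)) ⊕ Fin ms) ℝ)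
    (hQh : IsGenerator Qh)
    (μ : (k : Fin l) → Fin (mk k) → ℝ)
    (hμnonneg : ∀ k j, 0 ≤ μ k j) :
    IsGenerator (Matrix.of fun k k' : Fin l =>
      ∑ j, μ k j *
        ((∑ j' : Fin (mk k'), Qh (Sum.inl ⟨k, j⟩) (Sum.inl ⟨k', j'⟩)) +
          ∑ j'' : Fin ms,
            Qh (Sum.inl ⟨k, j⟩) (Sum.inr j'') * aVec l mk ms Qt k' j'')) := by
  have hdet := hQtHurwitz.det_ne_zero
  simp_rw [← mul_lumpingMatrix_apply (Qt := Qt)]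
  refine ⟨fun k k' hkk' => ?_, fun k => ?_⟩ <;> simp only [of_apply]
  · exact Finset.sum_nonneg fun j _ => mul_nonneg (hμnonneg k j)
      (hQh.mul_apply_nonneg (lumpingMatrix_nonneg hQtgen hdet) (lumpingMatrix_inl_of_ne hkk' j))
  · rw [Finset.sum_comm]
    refine Finset.sum_eq_zero fun j _ => ?_
    rw [← Finset.mul_sum, hQh.sum_mul_apply_eq_zero (sum_lumpingMatrix_eq_one hQtgen hdet),
      mul_zero]

/-- under the transient-state structure, with `Q̂` a generator and
`μ^k` the stationary distributions of the blocks `Q̃^k`, the matrix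
`Q̄_* = diag(μ^1,…,μ^l)(Q̂^{11} 𝟙̃ + Q̂^{12}(a_{m_1},…,a_{m_l}))`, whose `(k,k')`
entry is `Σ_j μ^k_j (Σ_{j'} Q̂_{(k,j),(k',j')} + Σ_{j''} Q̂_{(k,j),*j''} a_{m_{k'},j''})`,
is a generator. -/
theorem qbar_star_is_generator
    (l : ℕ) (hl : 1 ≤ l) (mk : Fin l → ℕ) (hmk : ∀ k, 1 ≤ mk k)
    (ms : ℕ) (hms : 1 ≤ ms)
    (Qt : Matrix ((Σ k : Fin l, Fin (mk k)) ⊕ Fin ms)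
      ((Σ k : Fin l, Fin (mk k)) ⊕ Fin ms) ℝ)
    (hQtgen : IsGenerator Qt)
    (hQtUR : ∀ (p : Σ k : Fin l, Fin (mk k)) (j : Fin ms),
      Qt (Sum.inl p) (Sum.inr j) = 0)
    (hQtblock : ∀ p q : Σ k : Fin l, Fin (mk k), p.1 ≠ q.1 →
      Qt (Sum.inl p) (Sum.inl q) = 0)
    (hQtblkgen : ∀ k : Fin l, IsGenerator
      (Matrix.of fun i j : Fin (mk k) => Qt (Sum.inl ⟨k, i⟩) (Sum.inl ⟨k, j⟩)))
    (hQtblkker : ∀ k : Fin l, KerSpannedByOnes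
      (Matrix.of fun i j : Fin (mk k) => Qt (Sum.inl ⟨k, i⟩) (Sum.inl ⟨k, j⟩)))
    (hQtHurwitz : IsHurwitz
      (Matrix.of fun i j : Fin ms => Qt (Sum.inr i) (Sum.inr j)))
    (Qh : Matrix ((Σ k : Fin l, Fin (mk k)) ⊕ Fin ms)
      ((Σ k : Fin l, Fin (mk k)) ⊕ Fin ms) ℝ)
    (hQh : IsGenerator Qh)
    (μ : (k : Fin l) → Fin (mk k) → ℝ)
    (hμnonneg : ∀ k j, 0 ≤ μ k j) (hμsum : ∀ k, ∑ j, μ k j = 1)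
    (hμstat : ∀ (k : Fin l) (j' : Fin (mk k)),
      ∑ j, μ k j * Qt (Sum.inl ⟨k, j⟩) (Sum.inl ⟨k, j'⟩) = 0) :
    IsGenerator (Matrix.of fun k k' : Fin l =>
      ∑ j, μ k j *
        ((∑ j' : Fin (mk k'), Qh (Sum.inl ⟨k, j⟩) (Sum.inl ⟨k', j'⟩)) +
          ∑ j'' : Fin ms,
            Qh (Sum.inl ⟨k, j⟩) (Sum.inr j'') * aVec l mk ms Qt k' j'')) :=
  qbar_star_is_generator_general l mk ms Qt hQtgen hQtHurwitz Qh hQh μ hμnonneg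
end
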